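/- arXiv:0912.1502 — 6 statements merged into one kernel-verified Lean document; each statement's English description precedes it below -/
import Mathlib

section
/- Let K be a field and K[X] = K[x_1,…,x_n]. Let I ⊆ K[X] be an ideal, let O = {t_1,…,t_μ} be an order ideal with border ∂O = {b_1,…,b_ν}, and let G = {g_1,…,g_ν} ⊆ I be a set of polynomials of the form g_j = b_j − Σ_{i=1}^{μ} α_{ij} t_i with α_{ij} ∈ K. If K[X] = I ⊕ ⟨O⟩_K as K-vector spaces, then the ideal generated by G equals I. -/
/-!
Let `J` be the ideal generated by the `g_b`, so `J ≤ I`. The subspace `J + ⟨O⟩_K` contains `1`,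
and it is stable under multiplication by every `x_j`: for `t ∈ O` the term `x_j t` lies in `O` or
in `∂O`, and every border term is congruent modulo `J` to an element of `⟨O⟩_K`. Hence
`J + ⟨O⟩_K = K[X]`, and since `I ∩ ⟨O⟩_K = 0`, modularity of the subspace lattice forces `J = I`.
-/

open MvPolynomial

/-- An order ideal: a finite set of monomials (represented by their exponent
vectors) closed under divisibility (`t' ∣ t` corresponds to `t' ≤ t`). -/
def IsOrderIdeal {n : ℕ} (O : Finset (Fin n →₀ ℕ)) : Prop :=
  ∀ t ∈ O, ∀ t' : Fin n →₀ ℕ, t' ≤ t → t' ∈ O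

/-- The border `∂O = {x_j · t : j, t ∈ O} \ O` of an order ideal, with the
convention `∂∅ = {1}`. -/
def border {n : ℕ} (O : Finset (Fin n →₀ ℕ)) : Set (Fin n →₀ ℕ) :=
  if O.Nonempty then
    {b | (∃ j : Fin n, ∃ t ∈ O, b = t + Finsupp.single j 1) ∧ b ∉ O}
  else {0}

/-- The `K`-vector subspace of `K[X]` spanned by a set of monomials. -/
noncomputable def monSpan (K : Type*) [Field K] {n : ℕ} (O : Set (Fin n →₀ ℕ)) :
    Submodule K (MvPolynomial (Fin n) K) :=
  Submodule.span K ((fun m => (monomial m (1 : K))) '' O)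

theorem MvPolynomial.submodule_eq_top_of_one_mem_of_mul_X_mem {σ R : Type*} [CommSemiring R]
    {S : Submodule R (MvPolynomial σ R)} (h1 : (1 : MvPolynomial σ R) ∈ S)
    (hX : ∀ p ∈ S, ∀ j, p * X j ∈ S) : S = ⊤ := by
  refine Submodule.eq_top_iff'.mpr fun p => ?_
  induction p using MvPolynomial.induction_on with
  | C a => simpa [smul_eq_C_mul] using S.smul_mem a h1
  | add p q hp hq => exact S.add_mem hp hq
  | mul_X p j hp => exact hX p hp j

section BorderPrebasis

variable {n : ℕ} {K : Type*} [Field K]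

theorem zero_mem_or_mem_border {O : Finset (Fin n →₀ ℕ)} (hO : IsOrderIdeal O) :
    0 ∈ O ∨ 0 ∈ border O := by
  rcases O.eq_empty_or_nonempty with rfl | ⟨t, ht⟩
  · simp [border]
  · exact Or.inl (hO t ht 0 zero_le)

theorem add_single_mem_or_mem_border {O : Finset (Fin n →₀ ℕ)} {t : Fin n →₀ ℕ} (ht : t ∈ O)
    (j : Fin n) : t + Finsupp.single j 1 ∈ O ∨ t + Finsupp.single j 1 ∈ border O := by
  by_cases h : t + Finsupp.single j 1 ∈ O
  · exact Or.inl h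
  · rw [border, if_pos ⟨t, ht⟩]
    exact Or.inr ⟨⟨j, t, ht, rfl⟩, h⟩

theorem monomial_mem_monSpan {O : Set (Fin n →₀ ℕ)} {t : Fin n →₀ ℕ} (ht : t ∈ O) (c : K) :
    monomial t c ∈ monSpan K O := by
  simpa [smul_monomial] using (monSpan K O).smul_mem c (Submodule.subset_span ⟨t, ht, rfl⟩)

theorem sum_monomial_mem_monSpan (O : Finset (Fin n →₀ ℕ)) (α : (Fin n →₀ ℕ) → K) :
    ∑ t ∈ O, monomial t (α t) ∈ monSpan K (O : Set (Fin n →₀ ℕ)) :=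
  Submodule.sum_mem _ fun t ht => monomial_mem_monSpan (Finset.mem_coe.mpr ht) (α t)

variable {J : Ideal (MvPolynomial (Fin n) K)} {O : Finset (Fin n →₀ ℕ)}

theorem mul_X_mem_sup_monSpan
    (hborder : ∀ b ∈ border O,
      monomial b 1 ∈ J.restrictScalars K ⊔ monSpan K (O : Set (Fin n →₀ ℕ)))
    {p : MvPolynomial (Fin n) K} (hp : p ∈ J.restrictScalars K ⊔ monSpan K (O : Set _))
    (j : Fin n) : p * X j ∈ J.restrictScalars K ⊔ monSpan K (O : Set (Fin n →₀ ℕ)) := by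
  set S := J.restrictScalars K ⊔ monSpan K (O : Set (Fin n →₀ ℕ))
  suffices S ≤ S.comap (LinearMap.mulRight K (X j)) from this hp
  refine sup_le (fun q hq => Submodule.mem_sup_left (J.mul_mem_right _ hq)) ?_
  refine Submodule.span_le.mpr ?_
  rintro _ ⟨t, ht, rfl⟩
  have hmul : monomial t (1 : K) * X j = monomial (t + Finsupp.single j 1) 1 := by
    rw [X, monomial_mul, one_mul]
  rw [SetLike.mem_coe, Submodule.mem_comap, LinearMap.mulRight_apply, hmul]
  rcases add_single_mem_or_mem_border ht j with hO | hb
  · exact Submodule.mem_sup_right (monomial_mem_monSpan hO 1)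
  · exact hborder _ hb

theorem sup_monSpan_eq_top (hO : IsOrderIdeal O)
    (hborder : ∀ b ∈ border O,
      monomial b 1 ∈ J.restrictScalars K ⊔ monSpan K (O : Set (Fin n →₀ ℕ))) :
    J.restrictScalars K ⊔ monSpan K (O : Set (Fin n →₀ ℕ)) = ⊤ := by
  refine submodule_eq_top_of_one_mem_of_mul_X_mem ?_ fun _ hp j =>
    mul_X_mem_sup_monSpan hborder hp j
  rw [← C_1, C_apply]
  rcases zero_mem_or_mem_border hO with h0 | h0
  · exact Submodule.mem_sup_right (monomial_mem_monSpan h0 1)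
  · exact hborder 0 h0

end BorderPrebasis

/-- if `G ⊆ I` consists of polynomials `g_j = b_j - ∑ α_{ij} t_i`
(one for every border term `b_j` of the order ideal `O`) and
`K[X] = I ⊕ ⟨O⟩_K` as `K`-vector spaces, then the ideal generated by `G` is `I`. -/
theorem ideal_span_of_border_prebasis {n : ℕ} {K : Type*} [Field K]
    (I : Ideal (MvPolynomial (Fin n) K))
    (O : Finset (Fin n →₀ ℕ)) (hO : IsOrderIdeal O)
    (g : (Fin n →₀ ℕ) → MvPolynomial (Fin n) K)
    (hgI : ∀ b ∈ border O, g b ∈ I)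
    (hgform : ∀ b ∈ border O, ∃ α : (Fin n →₀ ℕ) → K,
      g b = monomial b 1 - ∑ t ∈ O, monomial t (α t))
    (hcompl : IsCompl (Submodule.restrictScalars K I)
      (monSpan K (O : Set (Fin n →₀ ℕ)))) :
    Ideal.span (g '' border O) = I := by
  set J := Ideal.span (g '' border O)
  have hJI : J ≤ I := Ideal.span_le.mpr (by rintro _ ⟨b, hb, rfl⟩; exact hgI b hb)
  have hborder : ∀ b ∈ border O,
      monomial b 1 ∈ J.restrictScalars K ⊔ monSpan K (O : Set (Fin n →₀ ℕ)) := by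
    intro b hb
    obtain ⟨α, hα⟩ := hgform b hb
    rw [show monomial b (1 : K) = g b + ∑ t ∈ O, monomial t (α t) by rw [hα]; ring]
    exact Submodule.add_mem_sup (Ideal.subset_span ⟨b, hb, rfl⟩) (sum_monomial_mem_monSpan O α)
  exact Submodule.restrictScalars_injective K _ _ <|
    eq_of_le_of_inf_le_of_sup_le (fun _ hf => hJI hf) (hcompl.inf_eq_bot ▸ bot_le)
      (sup_monSpan_eq_top hO hborder ▸ le_top)
end

section
/- Let K be a field, K[X] = K[x_1,…,x_n], and d ∈ ℕ. Let Ĩ ⊆ ⟨T^n_{≤d}⟩_K be a K-subspace that is T^n_{≤d}-stabilized, i.e., Ĩ^+ ∩ ⟨T^n_{≤d}⟩_K = Ĩ, and that satisfies Ĩ + ⟨T^n_{≤d−1}⟩_K = ⟨T^n_{≤d}⟩_K. Then the ideal generated by Ĩ satisfies ⟨Ĩ⟩ ∩ ⟨T^n_{≤d}⟩_K = Ĩ; that is, Ĩ consists exactly of the polynomials of degree at most d in the ideal it generates. -/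
open MvPolynomial

/-- Total degree of a monomial given by its exponent vector. -/
def mdeg {n : ℕ} (m : Fin n →₀ ℕ) : ℕ := m.sum fun _ k => k

/-- The set `T^n_{≤e}` of monomials of total degree at most `e`. -/
def degLE (n e : ℕ) : Set (Fin n →₀ ℕ) := {m | mdeg m ≤ e}

/-- The neighborhood extension `V⁺ = V + x_1·V + ⋯ + x_n·V` of a `K`-subspace
of `K[X]`. -/
noncomputable def nbExt {n : ℕ} {K : Type*} [Field K]
    (V : Submodule K (MvPolynomial (Fin n) K)) : Submodule K (MvPolynomial (Fin n) K) :=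
  V ⊔ ⨆ j : Fin n, V.map (LinearMap.mulLeft K (X j : MvPolynomial (Fin n) K))

section Aux

variable {n : ℕ} {K : Type*} [Field K]

lemma mdeg_add (a b : Fin n →₀ ℕ) : mdeg (a + b) = mdeg a + mdeg b :=
  Finsupp.sum_add_index' (fun _ => rfl) (fun _ _ _ => rfl)

lemma mdeg_single (j : Fin n) : mdeg (Finsupp.single j 1) = 1 := by
  simp [mdeg, Finsupp.sum_single_index]

lemma mdeg_eq_degree (m : Fin n →₀ ℕ) : mdeg m = m.degree := by
  rfl

lemma mdeg_eq_zero_iff (m : Fin n →₀ ℕ) : mdeg m = 0 ↔ m = 0 := by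
  rw [mdeg_eq_degree]; exact Finsupp.degree_eq_zero_iff m

lemma mem_monSpan {e : ℕ} {p : MvPolynomial (Fin n) K} :
    p ∈ monSpan K (degLE n e) ↔ ∀ m ∈ p.support, mdeg m ≤ e := by
  classical
  constructor
  · intro hp
    have hle : monSpan K (degLE n e) ≤
        { carrier := {q : MvPolynomial (Fin n) K | ∀ m ∈ q.support, mdeg m ≤ e}
          add_mem' := by
            intro p q hp hq m hm
            rcases Finset.mem_union.mp (MvPolynomial.support_add hm) with h | h
            exacts [hp m h, hq m h]
          zero_mem' := by intro m hm; simp at hm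
          smul_mem' := by
            intro c q hq m hm
            exact hq m (MvPolynomial.support_smul hm) } := by
      rw [monSpan, Submodule.span_le]
      rintro x ⟨m, hm, rfl⟩
      intro m' hm'
      rw [MvPolynomial.support_monomial] at hm'
      simp only [one_ne_zero, if_false, Finset.mem_singleton] at hm'
      exact hm' ▸ hm
    exact hle hp
  · intro hp
    rw [MvPolynomial.as_sum p]
    apply Submodule.sum_mem
    intro m hm
    have : monomial m (coeff m p) = (coeff m p) • monomial m (1 : K) := by
      rw [MvPolynomial.smul_monomial, smul_eq_mul, mul_one]
    rw [this]
    exact Submodule.smul_mem _ _ (Submodule.subset_span ⟨m, hp m hm, rfl⟩)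

lemma monomial_mem_monSpan_s7 {e : ℕ} {m : Fin n →₀ ℕ} (c : K) (h : mdeg m ≤ e) :
    monomial m c ∈ monSpan K (degLE n e) := by
  classical
  rw [mem_monSpan]
  intro m' hm'
  rw [MvPolynomial.support_monomial] at hm'
  split_ifs at hm' with hc
  · simp at hm'
  · rw [Finset.mem_singleton] at hm'; exact hm' ▸ h

lemma monSpan_mono {e e' : ℕ} (h : e ≤ e') :
    monSpan K (degLE n e) ≤ monSpan K (degLE n e') := by
  intro p hp
  rw [mem_monSpan] at hp ⊢
  exact fun m hm => (hp m hm).trans h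

lemma X_mul_mem_monSpan {e : ℕ} {p : MvPolynomial (Fin n) K} (j : Fin n)
    (hp : p ∈ monSpan K (degLE n e)) :
    X j * p ∈ monSpan K (degLE n (e + 1)) := by
  classical
  rw [mem_monSpan] at hp ⊢
  intro m hm
  rw [MvPolynomial.mem_support_iff, MvPolynomial.coeff_X_mul'] at hm
  split_ifs at hm with hj
  · have hle : Finsupp.single j 1 ≤ m := by
      rw [Finsupp.single_le_iff]
      rw [Finsupp.mem_support_iff] at hj
      omega
    have hsub : m - Finsupp.single j 1 + Finsupp.single j 1 = m := tsub_add_cancel_of_le hle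
    have h1 : mdeg (m - Finsupp.single j 1) ≤ e :=
      hp _ (MvPolynomial.mem_support_iff.mpr hm)
    have h2 := mdeg_add (m - Finsupp.single j 1) (Finsupp.single j 1)
    rw [hsub, mdeg_single] at h2
    omega
  · exact absurd rfl hm

end Aux

section Homog

variable {n : ℕ} {K : Type*} [Field K]

lemma hc_mem_monSpan (k : ℕ) (p : MvPolynomial (Fin n) K) :
    homogeneousComponent k p ∈ monSpan K (degLE n k) := by
  rw [mem_monSpan]
  intro m hm
  rw [MvPolynomial.mem_support_iff, coeff_homogeneousComponent] at hm
  split_ifs at hm with h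
  · rw [mdeg_eq_degree, h]
  · exact absurd rfl hm

lemma sub_hc_mem_monSpan {e : ℕ} {p : MvPolynomial (Fin n) K}
    (hp : p ∈ monSpan K (degLE n (e + 1))) :
    p - homogeneousComponent (e + 1) p ∈ monSpan K (degLE n e) := by
  rw [mem_monSpan] at hp ⊢
  intro m hm
  rw [MvPolynomial.mem_support_iff, MvPolynomial.coeff_sub,
    coeff_homogeneousComponent] at hm
  split_ifs at hm with h
  · simp at hm
  · rw [← mdeg_eq_degree] at h
    have := fun hmm => hp m (MvPolynomial.mem_support_iff.mpr hmm)
    rw [sub_zero] at hm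
    have h2 := this hm
    omega

lemma hc_eq_zero_of_mem {e k : ℕ} {p : MvPolynomial (Fin n) K}
    (hp : p ∈ monSpan K (degLE n e)) (hk : e < k) :
    homogeneousComponent k p = 0 := by
  rw [mem_monSpan] at hp
  apply MvPolynomial.eq_zero_iff.mpr
  intro m
  rw [coeff_homogeneousComponent]
  split_ifs with h
  · rw [← mdeg_eq_degree] at h
    by_contra hc
    have := hp m (MvPolynomial.mem_support_iff.mpr hc)
    omega
  · rfl

lemma hc_X_mul (k : ℕ) (j : Fin n) (p : MvPolynomial (Fin n) K) :
    homogeneousComponent (k + 1) (X j * p) = X j * homogeneousComponent k p := by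
  classical
  apply MvPolynomial.ext
  intro m
  rw [coeff_homogeneousComponent, MvPolynomial.coeff_X_mul', MvPolynomial.coeff_X_mul',
    coeff_homogeneousComponent]
  by_cases hj : j ∈ m.support
  · simp only [hj, if_true]
    have hle : Finsupp.single j 1 ≤ m := by
      rw [Finsupp.single_le_iff]
      rw [Finsupp.mem_support_iff] at hj
      omega
    have hsub : m - Finsupp.single j 1 + Finsupp.single j 1 = m := tsub_add_cancel_of_le hle
    have h2 := mdeg_add (m - Finsupp.single j 1) (Finsupp.single j 1)
    rw [hsub, mdeg_single] at h2
    rw [← mdeg_eq_degree, ← mdeg_eq_degree]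
    by_cases h : mdeg m = k + 1
    · rw [if_pos h, if_pos (by omega)]
    · rw [if_neg h, if_neg (by omega)]
  · simp only [hj, if_false, ite_self]

end Homog

section NbExtLemmas

variable {n : ℕ} {K : Type*} [Field K]

lemma le_nbExt (A : Submodule K (MvPolynomial (Fin n) K)) : A ≤ nbExt A := le_sup_left

lemma X_mul_mem_nbExt {A : Submodule K (MvPolynomial (Fin n) K)} (j : Fin n)
    {x : MvPolynomial (Fin n) K} (hx : x ∈ A) : X j * x ∈ nbExt A := by
  have hmem : X j * x ∈ A.map (LinearMap.mulLeft K (X j : MvPolynomial (Fin n) K)) :=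
    ⟨x, hx, rfl⟩
  exact Submodule.mem_sup_right (Submodule.mem_iSup_of_mem j hmem)

lemma mem_nbExt {A : Submodule K (MvPolynomial (Fin n) K)} {f : MvPolynomial (Fin n) K} :
    f ∈ nbExt A ↔ ∃ g ∈ A, ∃ h : Fin n → MvPolynomial (Fin n) K,
      (∀ j, h j ∈ A) ∧ f = g + ∑ j, X j * h j := by
  constructor
  · intro hf
    obtain ⟨g, hg, s, hs, rfl⟩ := Submodule.mem_sup.mp hf
    have hs' : s ∈ ⨆ j ∈ (Finset.univ : Finset (Fin n)),
        A.map (LinearMap.mulLeft K (X j : MvPolynomial (Fin n) K)) := by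
      simpa using hs
    obtain ⟨μ, hsum⟩ := (Submodule.mem_iSup_finset_iff_exists_sum _ s).mp hs'
    have hch : ∀ j : Fin n, ∃ a : MvPolynomial (Fin n) K, a ∈ A ∧
        X j * a = (μ j : MvPolynomial (Fin n) K) := by
      intro j
      obtain ⟨a, ha, hae⟩ := Submodule.mem_map.mp (μ j).2
      exact ⟨a, ha, hae⟩
    choose h hh hhe using hch
    refine ⟨g, hg, h, hh, ?_⟩
    congr 1
    rw [← hsum]
    exact Finset.sum_congr rfl fun j _ => (hhe j).symm
  · rintro ⟨g, hg, h, hh, rfl⟩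
    exact Submodule.add_mem _ (le_nbExt A hg)
      (Submodule.sum_mem _ fun j _ => X_mul_mem_nbExt j (hh j))

lemma nbExt_mono {A B : Submodule K (MvPolynomial (Fin n) K)} (h : A ≤ B) :
    nbExt A ≤ nbExt B :=
  sup_le_sup h (iSup_mono fun _ => Submodule.map_mono h)

lemma nbExt_le_monSpan {e : ℕ} {A : Submodule K (MvPolynomial (Fin n) K)}
    (hA : A ≤ monSpan K (degLE n e)) : nbExt A ≤ monSpan K (degLE n (e + 1)) := by
  apply sup_le
  · exact hA.trans (monSpan_mono (by omega))
  · apply iSup_le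
    intro j
    rintro x ⟨a, ha, rfl⟩
    exact X_mul_mem_monSpan j (hA ha)

end NbExtLemmas

section Koszul

variable {n : ℕ} {K : Type*} [Field K]

lemma koszul (e : ℕ) (p : Fin n → MvPolynomial (Fin n) K)
    (hdeg : ∀ j, p j ∈ monSpan K (degLE n (e + 1)))
    (hsyz : ∑ j, X j * p j = 0) :
    ∃ q : Fin n → Fin n → MvPolynomial (Fin n) K,
      (∀ i j, q j i = - q i j) ∧ (∀ i, q i i = 0) ∧
      (∀ i j, q i j ∈ monSpan K (degLE n e)) ∧
      (∀ j, p j = ∑ i, X i * q i j) := by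
  classical
  -- the local coefficient choice
  set D : Fin n → Fin n → (Fin n →₀ ℕ) → K := fun i j μ =>
    if i = j then 0 else
    if hne : μ.support.Nonempty then
      (if i = μ.support.min' hne ∧ μ j ≠ 0 then coeff (μ - Finsupp.single j 1) (p j)
       else if j = μ.support.min' hne ∧ μ i ≠ 0 then - coeff (μ - Finsupp.single i 1) (p i)
       else 0)
    else 0 with hD
  -- skew-symmetry of D
  have hDskew : ∀ i j μ, D j i μ = - D i j μ := by
    intro i j μ
    by_cases hij : i = j
    · subst hij; rw [hD]; simp
    · rw [hD]
      simp only [hij, Ne.symm hij, if_false]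
      by_cases hne : μ.support.Nonempty
      · rw [dif_pos hne, dif_pos hne]
        by_cases h1 : i = μ.support.min' hne ∧ μ j ≠ 0
        · have h2 : ¬ (j = μ.support.min' hne ∧ μ i ≠ 0) := by
            rintro ⟨hj0, -⟩
            exact hij (h1.1.trans hj0.symm)
          rw [if_neg h2, if_pos h1, if_pos h1]
        · by_cases h2 : j = μ.support.min' hne ∧ μ i ≠ 0
          · rw [if_pos h2, if_neg h1, if_pos h2, neg_neg]
          · rw [if_neg h2, if_neg h1, if_neg h1, if_neg h2, neg_zero]
      · rw [dif_neg hne, dif_neg hne, neg_zero]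
  -- if D doesn't vanish on ρ + eᵢ + eⱼ, then a coefficient of p survives
  have hDne : ∀ i j ρ, D i j (ρ + Finsupp.single i 1 + Finsupp.single j 1) ≠ 0 →
      (ρ + Finsupp.single i 1) ∈ (p j).support ∨ (ρ + Finsupp.single j 1) ∈ (p i).support := by
    intro i j ρ hne0
    rw [hD] at hne0
    simp only at hne0
    split_ifs at hne0 with hij hne h1 h2
    · exact absurd rfl hne0
    · left
      rw [MvPolynomial.mem_support_iff]
      have : ρ + Finsupp.single i 1 + Finsupp.single j 1 - Finsupp.single j 1
          = ρ + Finsupp.single i 1 := add_tsub_cancel_right _ _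
      rwa [this] at hne0
    · right
      rw [MvPolynomial.mem_support_iff]
      have : ρ + Finsupp.single i 1 + Finsupp.single j 1 - Finsupp.single i 1
          = ρ + Finsupp.single j 1 := by
        rw [add_right_comm]
        exact add_tsub_cancel_right _ _
      rw [this] at hne0
      exact fun hc => hne0 (by rw [hc, neg_zero])
    · exact absurd rfl hne0
    · exact absurd rfl hne0
  -- the collecting finset
  set R : Finset (Fin n →₀ ℕ) := Finset.univ.biUnion fun k : Fin n =>
    Finset.univ.biUnion fun k' : Fin n =>
      (p k').support.image (fun m => m - Finsupp.single k 1) with hR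
  have hRmem : ∀ i j ρ, D i j (ρ + Finsupp.single i 1 + Finsupp.single j 1) ≠ 0 → ρ ∈ R := by
    intro i j ρ h
    rcases hDne i j ρ h with h' | h'
    · rw [hR]
      refine Finset.mem_biUnion.mpr ⟨i, Finset.mem_univ _, ?_⟩
      refine Finset.mem_biUnion.mpr ⟨j, Finset.mem_univ _, ?_⟩
      exact Finset.mem_image.mpr ⟨ρ + Finsupp.single i 1, h', add_tsub_cancel_right _ _⟩
    · rw [hR]
      refine Finset.mem_biUnion.mpr ⟨j, Finset.mem_univ _, ?_⟩
      refine Finset.mem_biUnion.mpr ⟨i, Finset.mem_univ _, ?_⟩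
      exact Finset.mem_image.mpr ⟨ρ + Finsupp.single j 1, h', add_tsub_cancel_right _ _⟩
  -- define q
  refine ⟨fun i j => ∑ ρ ∈ R, monomial ρ (D i j (ρ + Finsupp.single i 1 + Finsupp.single j 1)),
    ?_, ?_, ?_, ?_⟩
  · -- skew-symmetry
    intro i j
    rw [← Finset.sum_neg_distrib]
    refine Finset.sum_congr rfl fun ρ _ => ?_
    rw [add_right_comm ρ (Finsupp.single j 1), hDskew, map_neg]
  · -- diagonal
    intro i
    refine Finset.sum_eq_zero fun ρ _ => ?_
    rw [hD]
    simp
  · -- degree bound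
    intro i j
    refine Submodule.sum_mem _ fun ρ _ => ?_
    by_cases h0 : D i j (ρ + Finsupp.single i 1 + Finsupp.single j 1) = 0
    · rw [h0, map_zero]; exact Submodule.zero_mem _
    · apply monomial_mem_monSpan_s7
      rcases hDne i j ρ h0 with h' | h'
      · have := (mem_monSpan.mp (hdeg j)) _ h'
        rw [mdeg_add, mdeg_single] at this
        omega
      · have := (mem_monSpan.mp (hdeg i)) _ h'
        rw [mdeg_add, mdeg_single] at this
        omega
  · -- the key identity
    intro j
    apply MvPolynomial.ext
    intro ν
    rw [MvPolynomial.coeff_sum]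
    -- rewrite each summand
    have hterm : ∀ i : Fin n, coeff ν (X i * ∑ ρ ∈ R,
        monomial ρ (D i j (ρ + Finsupp.single i 1 + Finsupp.single j 1)))
        = if i ∈ ν.support then D i j (ν + Finsupp.single j 1) else 0 := by
      intro i
      rw [MvPolynomial.coeff_X_mul']
      by_cases hi : i ∈ ν.support
      · rw [if_pos hi, if_pos hi, MvPolynomial.coeff_sum]
        have hle : Finsupp.single i 1 ≤ ν := by
          rw [Finsupp.single_le_iff]
          rw [Finsupp.mem_support_iff] at hi
          omega
        have hcan : ν - Finsupp.single i 1 + Finsupp.single i 1 = ν :=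
          tsub_add_cancel_of_le hle
        have hsum : ∀ ρ ∈ R, coeff (ν - Finsupp.single i 1)
            (monomial ρ (D i j (ρ + Finsupp.single i 1 + Finsupp.single j 1)))
            = if ρ = ν - Finsupp.single i 1
              then D i j (ρ + Finsupp.single i 1 + Finsupp.single j 1) else 0 := by
          intro ρ _
          rw [MvPolynomial.coeff_monomial]
        rw [Finset.sum_congr rfl hsum, Finset.sum_ite_eq' R (ν - Finsupp.single i 1)]
        by_cases hmem : ν - Finsupp.single i 1 ∈ R
        · rw [if_pos hmem, hcan]
        · rw [if_neg hmem]
          by_contra hc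
          have : D i j (ν - Finsupp.single i 1 + Finsupp.single i 1 + Finsupp.single j 1) ≠ 0 := by
            rw [hcan]
            exact fun h => hc h.symm
          exact hmem (hRmem i j _ this)
      · rw [if_neg hi, if_neg hi]
    rw [Finset.sum_congr rfl (fun i _ => hterm i)]
    -- now the combinatorial core
    set μ : Fin n →₀ ℕ := ν + Finsupp.single j 1 with hμ
    have hμj : μ j ≠ 0 := by
      rw [hμ]
      simp [Finsupp.add_apply, Finsupp.single_eq_same]
    have hμne : μ.support.Nonempty := ⟨j, Finsupp.mem_support_iff.mpr hμj⟩
    have hμsub : μ - Finsupp.single j 1 = ν := add_tsub_cancel_right _ _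
    have hμother : ∀ i : Fin n, i ≠ j → μ i = ν i := by
      intro i hij
      rw [hμ, Finsupp.add_apply, Finsupp.single_apply, if_neg (Ne.symm hij), add_zero]
    -- the syzygy at μ
    have hsyzμ : ∑ i, (if i ∈ μ.support then coeff (μ - Finsupp.single i 1) (p i) else 0)
        = 0 := by
      have h0 : coeff μ (∑ i, X i * p i) = 0 := by rw [hsyz, MvPolynomial.coeff_zero]
      rw [MvPolynomial.coeff_sum] at h0
      calc ∑ i, (if i ∈ μ.support then coeff (μ - Finsupp.single i 1) (p i) else 0)
          = ∑ i, coeff μ (X i * p i) :=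
            Finset.sum_congr rfl fun i _ => (MvPolynomial.coeff_X_mul' _ _ _).symm
        _ = 0 := h0
    symm
    have hj0ne : μ.support.min' hμne = μ.support.min' hμne := rfl
    by_cases hcase : μ.support.min' hμne = j
    · -- j is the minimal variable of μ
      have hpt : ∀ i : Fin n,
          (if i ∈ ν.support then D i j μ else 0)
          + (if i ∈ μ.support then coeff (μ - Finsupp.single i 1) (p i) else 0)
          = if i = j then coeff ν (p j) else 0 := by
        intro i
        by_cases hij : i = j
        · subst hij
          have hD0 : D i i μ = 0 := by rw [hD]; simp
          rw [hD0, if_pos rfl, ite_self,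
            if_pos (Finsupp.mem_support_iff.mpr hμj), hμsub, zero_add]
        · rw [if_neg hij]
          by_cases hμi : μ i = 0
          · have h1 : i ∉ ν.support := by
              rw [Finsupp.mem_support_iff, not_not, ← hμother i hij]
              exact hμi
            have h2 : i ∉ μ.support := by
              rw [Finsupp.mem_support_iff, not_not]; exact hμi
            rw [if_neg h1, if_neg h2, add_zero]
          · have h1 : i ∈ ν.support := by
              rw [Finsupp.mem_support_iff, ← hμother i hij]
              exact hμi
            have h2 : i ∈ μ.support := by rw [Finsupp.mem_support_iff]; exact hμi
            rw [if_pos h1, if_pos h2]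
            have hDval : D i j μ = - coeff (μ - Finsupp.single i 1) (p i) := by
              rw [hD]
              simp only [hij, if_false]
              rw [dif_pos hμne]
              have hc1 : ¬ (i = μ.support.min' hμne ∧ μ j ≠ 0) := by
                rintro ⟨hi0, -⟩
                exact hij (hi0.trans hcase)
              have hc2 : j = μ.support.min' hμne ∧ μ i ≠ 0 := ⟨hcase.symm, hμi⟩
              rw [if_neg hc1, if_pos hc2]
            rw [hDval, neg_add_cancel]
      calc (∑ i, if i ∈ ν.support then D i j μ else 0)
          = ∑ i, ((if i ∈ ν.support then D i j μ else 0)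
              + (if i ∈ μ.support then coeff (μ - Finsupp.single i 1) (p i) else 0)) := by
            rw [Finset.sum_add_distrib, hsyzμ, add_zero]
        _ = ∑ i, if i = j then coeff ν (p j) else 0 :=
            Finset.sum_congr rfl fun i _ => hpt i
        _ = coeff ν (p j) := by
            rw [Finset.sum_ite_eq' Finset.univ j, if_pos (Finset.mem_univ j)]
    · -- the minimal variable of μ differs from j
      have hj0mem : μ.support.min' hμne ∈ μ.support := Finset.min'_mem _ _
      have hj0ν : μ.support.min' hμne ∈ ν.support := by
        rw [Finsupp.mem_support_iff, ← hμother _ hcase]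
        exact Finsupp.mem_support_iff.mp hj0mem
      have hpt : ∀ i : Fin n, (if i ∈ ν.support then D i j μ else 0)
          = if i = μ.support.min' hμne then coeff ν (p j) else 0 := by
        intro i
        by_cases hi0 : i = μ.support.min' hμne
        · have hiν : i ∈ ν.support := by rw [hi0]; exact hj0ν
          rw [if_pos hiν, if_pos hi0]
          have hij : ¬ i = j := by rw [hi0]; exact hcase
          rw [hD]
          simp only [hij, if_false]
          rw [dif_pos hμne, if_pos ⟨hi0, hμj⟩, hμsub]
        · rw [if_neg hi0]
          by_cases hiν : i ∈ ν.support
          · rw [if_pos hiν]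
            rw [hD]
            by_cases hij : i = j
            · simp [hij]
            · simp only [hij, if_false]
              rw [dif_pos hμne]
              have hc1 : ¬ (i = μ.support.min' hμne ∧ μ j ≠ 0) := by
                rintro ⟨hi', -⟩; exact hi0 hi'
              have hc2 : ¬ (j = μ.support.min' hμne ∧ μ i ≠ 0) := by
                rintro ⟨hj', -⟩; exact hcase hj'.symm
              rw [if_neg hc1, if_neg hc2]
          · rw [if_neg hiν]
      rw [Finset.sum_congr rfl (fun i _ => hpt i),
        Finset.sum_ite_eq' Finset.univ (μ.support.min' hμne),
        if_pos (Finset.mem_univ _)]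

end Koszul

section Step

variable {n : ℕ} {K : Type*} [Field K]

lemma sum_sum_skew (a : Fin n → Fin n → MvPolynomial (Fin n) K)
    (hskew : ∀ i j, a j i = - a i j) (hdiag : ∀ i, a i i = 0) :
    ∑ j, ∑ i, X j * (X i * a i j) = 0 := by
  classical
  rw [← Finset.sum_product']
  apply Finset.sum_ninvolution (fun x : Fin n × Fin n => (x.2, x.1))
  · intro x
    have : a x.2 x.1 = - a x.1 x.2 := hskew _ _
    simp only [this]
    ring
  · intro x hx
    intro hc
    have h1 : x.1 = x.2 := congrArg Prod.snd hc
    apply hx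
    rw [← h1, hdiag, mul_zero, mul_zero]
  · intro x; exact Finset.mem_univ _
  · intro x; rfl

lemma monSpan_succ_le {c e : ℕ} (hce : c < e) {A : Submodule K (MvPolynomial (Fin n) K)}
    (hsumA : A ⊔ monSpan K (degLE n c) = monSpan K (degLE n e)) :
    monSpan K (degLE n (e + 1)) ≤ nbExt A ⊔ monSpan K (degLE n c) := by
  classical
  rw [monSpan, Submodule.span_le]
  rintro x ⟨m, hm, rfl⟩
  simp only [SetLike.mem_coe]
  rw [degLE, Set.mem_setOf_eq] at hm
  by_cases hlow : mdeg m ≤ e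
  · have : monomial m (1 : K) ∈ monSpan K (degLE n e) := monomial_mem_monSpan_s7 _ hlow
    rw [← hsumA] at this
    exact (sup_le_sup (le_nbExt A) (le_refl _)) this
  · have hdm : mdeg m = e + 1 := by omega
    have hmne : m ≠ 0 := by
      intro h
      rw [h, (mdeg_eq_zero_iff (0 : Fin n →₀ ℕ)).mpr rfl] at hdm
      omega
    obtain ⟨j, hj⟩ := Finsupp.support_nonempty_iff.mpr hmne
    have hle : Finsupp.single j 1 ≤ m := by
      rw [Finsupp.single_le_iff]
      rw [Finsupp.mem_support_iff] at hj
      omega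
    have hcan : m - Finsupp.single j 1 + Finsupp.single j 1 = m := tsub_add_cancel_of_le hle
    have hdm' : mdeg (m - Finsupp.single j 1) = e := by
      have := mdeg_add (m - Finsupp.single j 1) (Finsupp.single j 1)
      rw [hcan, mdeg_single] at this
      omega
    have hmem : monomial (m - Finsupp.single j 1) (1 : K) ∈ A ⊔ monSpan K (degLE n c) := by
      rw [hsumA]
      exact monomial_mem_monSpan_s7 _ (le_of_eq hdm')
    obtain ⟨ga, hga, gr, hgr, hsplit⟩ := Submodule.mem_sup.mp hmem
    have hfact : monomial m (1 : K) = X j * monomial (m - Finsupp.single j 1) (1 : K) := by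
      rw [MvPolynomial.X, MvPolynomial.monomial_mul, one_mul, add_comm, hcan]
    rw [hfact, ← hsplit, mul_add]
    apply Submodule.add_mem
    · exact Submodule.mem_sup_left (X_mul_mem_nbExt j hga)
    · have h1 : X j * gr ∈ monSpan K (degLE n (c + 1)) := X_mul_mem_monSpan j hgr
      have h2 : X j * gr ∈ A ⊔ monSpan K (degLE n c) := by
        rw [hsumA]
        exact monSpan_mono (by omega) h1
      exact (sup_le_sup (le_nbExt A) (le_refl _)) h2

end Step

section MainStep

variable {n : ℕ} {K : Type*} [Field K]

lemma step {c e : ℕ} (hce : c < e) (A : Submodule K (MvPolynomial (Fin n) K))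
    (hA : A ≤ monSpan K (degLE n e))
    (hstabA : nbExt A ⊓ monSpan K (degLE n e) = A)
    (hsumA : A ⊔ monSpan K (degLE n c) = monSpan K (degLE n e)) :
    nbExt A ≤ monSpan K (degLE n (e + 1)) ∧
    nbExt (nbExt A) ⊓ monSpan K (degLE n (e + 1)) = nbExt A ∧
    nbExt A ⊔ monSpan K (degLE n c) = monSpan K (degLE n (e + 1)) := by
  classical
  have h1 : nbExt A ≤ monSpan K (degLE n (e + 1)) := nbExt_le_monSpan hA
  have h3 : nbExt A ⊔ monSpan K (degLE n c) = monSpan K (degLE n (e + 1)) := by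
    apply le_antisymm
    · exact sup_le h1 (monSpan_mono (by omega))
    · exact monSpan_succ_le hce hsumA
  refine ⟨h1, le_antisymm ?_ (le_inf (le_nbExt _) h1), h3⟩
  -- the hard inclusion
  intro f hf
  obtain ⟨hf1, hf2⟩ := Submodule.mem_inf.mp hf
  obtain ⟨g, hg, h, hh, rfl⟩ := mem_nbExt.mp hf1
  -- top homogeneous components of the h j give a syzygy
  set τ : Fin n → MvPolynomial (Fin n) K := fun j => homogeneousComponent (e + 1) (h j) with hτ
  have hhV : ∀ j, h j ∈ monSpan K (degLE n (e + 1)) := fun j => h1 (hh j)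
  have hgV : g ∈ monSpan K (degLE n (e + 1)) := h1 hg
  have hτsyz : ∑ j, X j * τ j = 0 := by
    have hsum2 : ∑ j, X j * τ j = homogeneousComponent (e + 2) (∑ j, X j * h j) := by
      rw [map_sum]
      exact Finset.sum_congr rfl fun j _ => (hc_X_mul (e + 1) j (h j)).symm
    have hdiff : (∑ j, X j * h j) = (g + ∑ j, X j * h j) - g := by ring
    rw [hsum2, hdiff, map_sub, hc_eq_zero_of_mem hf2 (by omega),
      hc_eq_zero_of_mem hgV (by omega), sub_zero]
  have hτdeg : ∀ j, τ j ∈ monSpan K (degLE n (e + 1)) := fun j => hc_mem_monSpan _ _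
  obtain ⟨q, hqskew, hqdiag, hqdeg, hqrep⟩ := koszul e τ hτdeg hτsyz
  -- decompose q into a part in A and a part of low degree, skew-symmetrically
  have hqmem : ∀ i j, q i j ∈ A ⊔ monSpan K (degLE n c) := by
    intro i j
    rw [hsumA]
    exact hqdeg i j
  have hchoice : ∀ i j, ∃ ar : MvPolynomial (Fin n) K × MvPolynomial (Fin n) K,
      ar.1 ∈ A ∧ ar.2 ∈ monSpan K (degLE n c) ∧ q i j = ar.1 + ar.2 := by
    intro i j
    obtain ⟨x, hx, y, hy, hxy⟩ := Submodule.mem_sup.mp (hqmem i j)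
    exact ⟨(x, y), hx, hy, hxy.symm⟩
  choose ar har1 har2 har3 using hchoice
  set a : Fin n → Fin n → MvPolynomial (Fin n) K := fun i j =>
    if i < j then (ar i j).1 else if j < i then - (ar j i).1 else 0 with ha
  set r : Fin n → Fin n → MvPolynomial (Fin n) K := fun i j =>
    if i < j then (ar i j).2 else if j < i then - (ar j i).2 else 0 with hr
  have haA : ∀ i j, a i j ∈ A := by
    intro i j
    rw [ha]
    simp only
    split_ifs
    · exact har1 i j
    · exact A.neg_mem (har1 j i)
    · exact A.zero_mem
  have hrV : ∀ i j, r i j ∈ monSpan K (degLE n c) := by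
    intro i j
    rw [hr]
    simp only
    split_ifs
    · exact har2 i j
    · exact Submodule.neg_mem _ (har2 j i)
    · exact Submodule.zero_mem _
  have haskew : ∀ i j, a j i = - a i j := by
    intro i j
    rw [ha]
    simp only
    rcases lt_trichotomy i j with hij | hij | hij
    · rw [if_neg (by omega), if_pos hij, if_pos hij]
    · rw [hij]
      simp
    · rw [if_pos hij, if_neg (by omega), if_pos hij, neg_neg]
  have hadiag : ∀ i, a i i = 0 := by
    intro i
    rw [ha]
    simp
  have hqar : ∀ i j, q i j = a i j + r i j := by
    intro i j
    rw [ha, hr]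
    simp only
    rcases lt_trichotomy i j with hij | hij | hij
    · rw [if_pos hij, if_pos hij]
      exact har3 i j
    · subst hij
      rw [hqdiag]
      simp
    · rw [if_neg (by omega), if_pos hij, if_neg (by omega), if_pos hij]
      rw [hqskew j i, har3 j i]
      ring
  -- the corrected elements
  set h' : Fin n → MvPolynomial (Fin n) K := fun j => h j - ∑ i, X i * a i j with hh'
  have hh'nb : ∀ j, h' j ∈ nbExt A := by
    intro j
    rw [hh']
    exact Submodule.sub_mem _ (hh j)
      (Submodule.sum_mem _ fun i _ => X_mul_mem_nbExt i (haA i j))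
  have hh'V : ∀ j, h' j ∈ monSpan K (degLE n e) := by
    intro j
    have hsplit : h' j = (h j - τ j) + ∑ i, X i * r i j := by
      rw [hh', hτ]
      simp only
      have : τ j = ∑ i, X i * a i j + ∑ i, X i * r i j := by
        rw [← Finset.sum_add_distrib]
        rw [hqrep j]
        refine Finset.sum_congr rfl fun i _ => ?_
        rw [hqar i j, mul_add]
      rw [hτ] at this
      simp only at this
      rw [this]
      ring
    rw [hsplit]
    apply Submodule.add_mem
    · exact sub_hc_mem_monSpan (hhV j)
    · refine Submodule.sum_mem _ fun i _ => ?_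
      exact monSpan_mono (by omega) (X_mul_mem_monSpan i (hrV i j))
  have hh'A : ∀ j, h' j ∈ A := by
    intro j
    rw [← hstabA]
    exact Submodule.mem_inf.mpr ⟨hh'nb j, hh'V j⟩
  -- conclude
  have hsums : ∑ j, X j * h j = ∑ j, X j * h' j := by
    have hzero : ∑ j, ∑ i, X j * (X i * a i j) = 0 := sum_sum_skew a haskew hadiag
    rw [hh']
    simp only
    calc ∑ j, X j * h j
        = ∑ j, (X j * (h j - ∑ i, X i * a i j) + X j * (∑ i, X i * a i j)) := by
          refine Finset.sum_congr rfl fun j _ => ?_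
          ring
      _ = ∑ j, X j * (h j - ∑ i, X i * a i j) + ∑ j, X j * ∑ i, X i * a i j := by
          rw [Finset.sum_add_distrib]
      _ = ∑ j, X j * (h j - ∑ i, X i * a i j) := by
          have : ∑ j, X j * ∑ i, X i * a i j = ∑ j, ∑ i, X j * (X i * a i j) := by
            refine Finset.sum_congr rfl fun j _ => ?_
            rw [Finset.mul_sum]
          rw [this, hzero, add_zero]
  rw [hsums]
  exact Submodule.add_mem _ hg (Submodule.sum_mem _ fun j _ => X_mul_mem_nbExt j (hh'A j))

end MainStep

/-- Iterated neighborhood extension. -/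
noncomputable def iterNbExt {n : ℕ} {K : Type*} [Field K]
    (It : Submodule K (MvPolynomial (Fin n) K)) : ℕ → Submodule K (MvPolynomial (Fin n) K)
  | 0 => It
  | k + 1 => nbExt (iterNbExt It k)

/-- if `Ĩ ⊆ ⟨T^n_{≤d}⟩_K` is `T^n_{≤d}`-stabilized and
`Ĩ + ⟨T^n_{≤d-1}⟩_K = ⟨T^n_{≤d}⟩_K`, then the ideal generated by `Ĩ`
satisfies `⟨Ĩ⟩ ∩ ⟨T^n_{≤d}⟩_K = Ĩ`. -/
theorem ideal_span_inter_degLE_eq {n : ℕ} {K : Type*} [Field K] (d : ℕ)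
    (It : Submodule K (MvPolynomial (Fin n) K))
    (hle : It ≤ monSpan K (degLE n d))
    (hstab : nbExt It ⊓ monSpan K (degLE n d) = It)
    (hsum : It ⊔ monSpan K (degLE n (d - 1)) = monSpan K (degLE n d)) :
    Submodule.restrictScalars K (Ideal.span (It : Set (MvPolynomial (Fin n) K)))
      ⊓ monSpan K (degLE n d) = It := by
  classical
  -- first dispose of the degenerate case d = 0
  by_cases hd0 : d = 0
  · subst hd0
    by_cases hbot : It = ⊥
    · subst hbot
      rw [Submodule.bot_coe, Ideal.span_singleton_eq_bot.mpr rfl]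
      apply le_antisymm
      · intro x hx
        obtain ⟨hx1, -⟩ := Submodule.mem_inf.mp hx
        exact hx1
      · exact bot_le
    · obtain ⟨f, hfIt, hfne⟩ := Submodule.exists_mem_ne_zero_of_ne_bot hbot
      have hfV := hle hfIt
      rw [mem_monSpan] at hfV
      -- f is a nonzero constant
      have hone : (1 : MvPolynomial (Fin n) K) ∈ It := by
        have hc0 : coeff 0 f ≠ 0 := by
          intro hc
          apply hfne
          apply MvPolynomial.eq_zero_iff.mpr
          intro m
          by_cases hm : m = 0
          · rw [hm]; exact hc
          · by_contra hcm
            have := hfV m (MvPolynomial.mem_support_iff.mpr hcm)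
            rw [Nat.le_zero, mdeg_eq_zero_iff] at this
            exact hm this
        have hfC : f = MvPolynomial.C (coeff 0 f) := by
          apply MvPolynomial.ext
          intro m
          rw [MvPolynomial.coeff_C]
          by_cases hm : 0 = m
          · rw [if_pos hm, ← hm]
          · rw [if_neg hm]
            by_contra hcm
            have := hfV m (MvPolynomial.mem_support_iff.mpr hcm)
            rw [Nat.le_zero, mdeg_eq_zero_iff] at this
            exact hm this.symm
        have h1 : (coeff 0 f)⁻¹ • f = (coeff 0 f)⁻¹ • MvPolynomial.C (coeff 0 f) := by
          rw [← hfC]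
        have h2 : (coeff 0 f)⁻¹ • (MvPolynomial.C (coeff 0 f) : MvPolynomial (Fin n) K) = 1 := by
          rw [MvPolynomial.smul_eq_C_mul, ← MvPolynomial.C_mul,
            inv_mul_cancel₀ hc0, MvPolynomial.C_1]
        rw [← h1.trans h2]
        exact It.smul_mem _ hfIt
      have hItV : It = monSpan K (degLE n 0) := by
        apply le_antisymm hle
        rw [monSpan, Submodule.span_le]
        rintro x ⟨m, hm, rfl⟩
        rw [degLE, Set.mem_setOf_eq, Nat.le_zero, mdeg_eq_zero_iff] at hm
        subst hm
        show monomial (0 : Fin n →₀ ℕ) (1 : K) ∈ (It : Set (MvPolynomial (Fin n) K))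
        have hmon1 : monomial (0 : Fin n →₀ ℕ) (1 : K) = 1 := by
          rw [← MvPolynomial.C_apply, MvPolynomial.C_1]
        rw [hmon1]
        exact hone
      have htop : Ideal.span (It : Set (MvPolynomial (Fin n) K)) = ⊤ := by
        rw [Ideal.eq_top_iff_one]
        exact Ideal.subset_span hone
      rw [htop]
      apply le_antisymm
      · intro x hx
        obtain ⟨-, hx2⟩ := Submodule.mem_inf.mp hx
        rw [hItV]
        exact hx2
      · exact le_inf (fun x _ => trivial) hle
  -- main case d ≥ 1
  have hd1 : 1 ≤ d := by omega
  -- invariants of the iterated extension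
  have hinv : ∀ k : ℕ, iterNbExt It k ≤ monSpan K (degLE n (d + k)) ∧
      nbExt (iterNbExt It k) ⊓ monSpan K (degLE n (d + k)) = iterNbExt It k ∧
      iterNbExt It k ⊔ monSpan K (degLE n (d - 1)) = monSpan K (degLE n (d + k)) := by
    intro k
    induction k with
    | zero => exact ⟨hle, hstab, hsum⟩
    | succ k ih =>
      obtain ⟨ih1, ih2, ih3⟩ := ih
      have hce : d - 1 < d + k := by omega
      obtain ⟨s1, s2, s3⟩ := step hce (iterNbExt It k) ih1 ih2 ih3
      have hde : d + (k + 1) = (d + k) + 1 := by omega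
      rw [hde]
      exact ⟨s1, s2, s3⟩
  -- intersections with V d stay at It
  have hinter : ∀ k : ℕ, iterNbExt It k ⊓ monSpan K (degLE n d) = It := by
    intro k
    induction k with
    | zero => exact inf_eq_left.mpr hle
    | succ k ih =>
      have hVle : monSpan K (degLE n d) ≤ monSpan K (degLE n (d + k)) :=
        monSpan_mono (by omega)
      calc iterNbExt It (k + 1) ⊓ monSpan K (degLE n d)
          = nbExt (iterNbExt It k) ⊓ (monSpan K (degLE n (d + k)) ⊓ monSpan K (degLE n d)) := by
            rw [inf_eq_right.mpr hVle]
            rfl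
        _ = (nbExt (iterNbExt It k) ⊓ monSpan K (degLE n (d + k))) ⊓ monSpan K (degLE n d) := by
            rw [inf_assoc]
        _ = iterNbExt It k ⊓ monSpan K (degLE n d) := by rw [(hinv k).2.1]
        _ = It := ih
  -- the iterated extensions exhaust the ideal generated by It
  have hiterle : ∀ k : ℕ, iterNbExt It k ≤
      Submodule.restrictScalars K (Ideal.span (It : Set (MvPolynomial (Fin n) K))) := by
    intro k
    induction k with
    | zero => exact fun x hx => Ideal.subset_span hx
    | succ k ih =>
      apply sup_le ih
      apply iSup_le
      intro j
      rintro x ⟨y, hy, rfl⟩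
      exact Ideal.mul_mem_left _ _ (ih hy)
  have hmono : Monotone (iterNbExt It) := monotone_nat_of_le_succ fun k => le_sup_left
  set S : Submodule K (MvPolynomial (Fin n) K) := ⨆ k, iterNbExt It k with hS
  have hmemS : ∀ x : MvPolynomial (Fin n) K, x ∈ S ↔ ∃ k, x ∈ iterNbExt It k := by
    intro x
    rw [hS]
    exact Submodule.mem_iSup_of_directed _ hmono.directed_le
  have hXS : ∀ (j : Fin n) (x : MvPolynomial (Fin n) K), x ∈ S → X j * x ∈ S := by
    intro j x hx
    obtain ⟨k, hk⟩ := (hmemS x).mp hx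
    exact (hmemS _).mpr ⟨k + 1, X_mul_mem_nbExt j hk⟩
  have hmulS : ∀ f x : MvPolynomial (Fin n) K, x ∈ S → f * x ∈ S := by
    intro f
    induction f using MvPolynomial.induction_on with
    | C a =>
      intro x hx
      rw [MvPolynomial.C_mul']
      exact S.smul_mem a hx
    | add p q hp hq =>
      intro x hx
      rw [add_mul]
      exact S.add_mem (hp x hx) (hq x hx)
    | mul_X p j hp =>
      intro x hx
      rw [mul_assoc]
      exact hp _ (hXS j x hx)
  have hspanS : ∀ x ∈ Ideal.span (It : Set (MvPolynomial (Fin n) K)), x ∈ S := by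
    have hJ : Ideal.span (It : Set (MvPolynomial (Fin n) K)) ≤
        ({ carrier := S
           add_mem' := fun h1 h2 => S.add_mem h1 h2
           zero_mem' := S.zero_mem
           smul_mem' := fun c x hx => by
             simpa [smul_eq_mul] using hmulS c x hx } : Ideal (MvPolynomial (Fin n) K)) := by
      rw [Ideal.span_le]
      intro x hx
      exact (hmemS x).mpr ⟨0, hx⟩
    exact fun x hx => hJ hx
  -- conclude
  apply le_antisymm
  · intro f hf
    obtain ⟨hf1, hf2⟩ := Submodule.mem_inf.mp hf
    obtain ⟨k, hk⟩ := (hmemS f).mp (hspanS f hf1)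
    rw [← hinter k]
    exact Submodule.mem_inf.mpr ⟨hk, hf2⟩
  · exact le_inf (fun x hx => Ideal.subset_span hx) hle
end

section
/- Let K be a field, K[X] = K[x_1,…,x_n], I ⊆ K[X] a zero-dimensional ideal, and d = dim_K K[X]/I. Then the quotient vector space I^{≤d} / I^{≤d−1} is isomorphic as a K-vector space to ⟨T^n_{=d}⟩_K; equivalently, dim_K I^{≤d} − dim_K I^{≤d−1} equals the number of monomials of total degree exactly d in n variables. -/
open MvPolynomial

/-- The set `T^n_{=e}` of monomials of total degree exactly `e`. -/
def degEQ (n e : ℕ) : Set (Fin n →₀ ℕ) := {m | mdeg m = e}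

/-- The degree filtration `I^{≤i} = {p ∈ I : deg p ≤ i}` of an ideal `I`,
as a `K`-subspace of `K[X]` (indexed by `i : ℤ`, so that `I^{≤-1} = 0`). -/
noncomputable def Ile {n : ℕ} {K : Type*} [Field K]
    (I : Ideal (MvPolynomial (Fin n) K)) (i : ℤ) : Submodule K (MvPolynomial (Fin n) K) :=
  Submodule.restrictScalars K I ⊓ monSpan K {m : Fin n →₀ ℕ | (mdeg m : ℤ) ≤ i}

/-!
Write `A = K[X]/I` and let `W e ⊆ A` be the image of the polynomials of total degree `≤ e`.
The `W e` increase with `e`, `W 0 ∋ 1` is nonzero, and as soon as `W (e + 1) = W e` the subspace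
`W e` is closed under multiplication by the variables, hence equals `A`. A strictly increasing
chain of subspaces of `A` starting in dimension `≥ 1` reaches `A` after at most `dim A - 1` steps,
so already the polynomials of degree `≤ d - 1` surject onto `A`. By rank–nullity,
`dim I^{≤i} = #{m : deg m ≤ i} - d` for all `i ≥ d - 1`, and taking the difference at `i = d`
and `i = d - 1` leaves exactly the monomials of degree `d`.
-/

open Module

theorem Submodule.finrank_map_add_finrank_ker_inf {K V W : Type*} [DivisionRing K]
    [AddCommGroup V] [Module K V] [AddCommGroup W] [Module K W] (φ : V →ₗ[K] W)
    (P : Submodule K V) [FiniteDimensional K P] :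
    finrank K (P.map φ) + finrank K ↥(LinearMap.ker φ ⊓ P) = finrank K P := by
  have h := LinearMap.finrank_range_add_finrank_ker (φ.domRestrict P)
  rw [LinearMap.range_domRestrict, LinearMap.ker_domRestrict] at h
  rwa [← (Submodule.comapSubtypeEquivOfLe (inf_le_right : LinearMap.ker φ ⊓ P ≤ P)).finrank_eq,
    Submodule.comap_inf, Submodule.comap_subtype_self, inf_top_eq]

theorem Submodule.finrank_quotient_comap_subtype_add_finrank {K V : Type*} [DivisionRing K]
    [AddCommGroup V] [Module K V] {p q : Submodule K V} [FiniteDimensional K q] (h : p ≤ q) :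
    finrank K (q ⧸ p.comap q.subtype) + finrank K p = finrank K q := by
  rw [← (Submodule.comapSubtypeEquivOfLe h).finrank_eq]
  exact Submodule.finrank_quotient_add_finrank _

theorem Submodule.eq_top_of_monotone_of_stabilizes {K V : Type*} [DivisionRing K]
    [AddCommGroup V] [Module K V] [FiniteDimensional K V] {W : ℕ → Submodule K V}
    (hW : Monotone W) (hstab : ∀ e, W (e + 1) ≤ W e → W e = ⊤) (h0 : W 0 ≠ ⊥) :
    W (finrank K V - 1) = ⊤ := by
  have growth : ∀ e, W e = ⊤ ∨ e + 1 ≤ finrank K (W e) := by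
    intro e
    induction e with
    | zero => exact .inr (Submodule.one_le_finrank_iff.2 h0)
    | succ e ih =>
      by_cases htop : W (e + 1) = ⊤
      · exact .inl htop
      have hlt : W e < W (e + 1) := lt_of_le_not_ge (hW e.le_succ) fun h =>
        htop (top_unique ((hstab e h).symm.trans_le (hW e.le_succ)).ge)
      rcases ih with ih | ih
      · exact absurd (top_unique (ih ▸ hlt.le)) htop
      · exact .inr ((Submodule.finrank_lt_finrank_of_lt hlt).trans_le' ih)
  have hpos : 0 < finrank K V := Module.finrank_pos_iff_exists_ne_zero.2 <| by
    obtain ⟨v, -, hv⟩ := (Submodule.ne_bot_iff _).1 h0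
    exact ⟨v, hv⟩
  refine (growth _).elim id fun h => Submodule.eq_top_of_finrank_eq ?_
  exact le_antisymm (Submodule.finrank_le _) (by omega)

section DegreeFiltration

variable {σ K A : Type*} [Field K] [CommRing A] [Algebra K A]

theorem mul_X_mem_restrictTotalDegree {e : ℕ} {p : MvPolynomial σ K}
    (hp : p ∈ restrictTotalDegree σ K e) (i : σ) : p * X i ∈ restrictTotalDegree σ K (e + 1) := by
  rw [mem_restrictTotalDegree] at hp ⊢
  exact (totalDegree_mul p (X i)).trans (add_le_add hp (totalDegree_X i).le)

theorem restrictTotalDegree_mono : Monotone (restrictTotalDegree σ K) :=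
  fun _ _ h => restrictSupport_mono K fun _ hm => le_trans hm h

variable {f : MvPolynomial σ K →ₐ[K] A}

theorem map_restrictTotalDegree_eq_top_of_stabilizes (hf : Function.Surjective f) {e : ℕ}
    (h : (restrictTotalDegree σ K (e + 1)).map f.toLinearMap ≤
      (restrictTotalDegree σ K e).map f.toLinearMap) :
    (restrictTotalDegree σ K e).map f.toLinearMap = ⊤ := by
  refine Submodule.eq_top_iff'.2 fun a => ?_
  obtain ⟨p, rfl⟩ := hf a
  induction p using MvPolynomial.induction_on with
  | C c => exact ⟨C c, (mem_restrictTotalDegree _ _ _).2 (by simp), rfl⟩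
  | add p q hp hq => simpa only [map_add] using add_mem hp hq
  | mul_X p i hp =>
    obtain ⟨q, hq, hqp⟩ := hp
    refine h ⟨q * X i, mul_X_mem_restrictTotalDegree hq i, ?_⟩
    simp only [AlgHom.toLinearMap_apply, map_mul] at hqp ⊢
    rw [hqp]

theorem map_restrictTotalDegree_finrank_pred_eq_top [FiniteDimensional K A] [Nontrivial A]
    (hf : Function.Surjective f) :
    (restrictTotalDegree σ K (finrank K A - 1)).map f.toLinearMap = ⊤ := by
  refine Submodule.eq_top_of_monotone_of_stabilizes
    (fun _ _ h => Submodule.map_mono (restrictTotalDegree_mono h))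
    (fun _ => map_restrictTotalDegree_eq_top_of_stabilizes hf) ?_
  refine (Submodule.ne_bot_iff _).2 ⟨1, ⟨1, ?_, map_one f⟩, one_ne_zero⟩
  exact (mem_restrictTotalDegree _ _ _).2 (by simp)

end DegreeFiltration

section Monomials

variable {n : ℕ} {K : Type*} [Field K]

theorem monSpan_eq_restrictSupport (O : Set (Fin n →₀ ℕ)) :
    monSpan K O = restrictSupport K O :=
  (restrictSupport_eq_span K O).symm

theorem finrank_monSpan {O : Set (Fin n →₀ ℕ)} (hO : O.Finite) :
    finrank K (monSpan K O) = O.ncard := by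
  have := hO.to_subtype
  rw [monSpan_eq_restrictSupport, finrank_eq_nat_card_basis (basisRestrictSupport (R := K) O),
    Nat.card_coe_set_eq]

theorem finiteDimensional_monSpan {O : Set (Fin n →₀ ℕ)} (hO : O.Finite) :
    FiniteDimensional K (monSpan K O) :=
  FiniteDimensional.span_of_finite K (hO.image _)

theorem finite_setOf_mdeg_le (i : ℤ) : {m : Fin n →₀ ℕ | (mdeg m : ℤ) ≤ i}.Finite :=
  (Finsupp.finite_of_degree_le i.toNat).subset fun m (hm : (mdeg m : ℤ) ≤ i) =>
    show mdeg m ≤ i.toNat by omega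

theorem finite_degEQ (d : ℕ) : (degEQ n d).Finite :=
  Finsupp.finite_of_degree_eq d

theorem ncard_setOf_mdeg_le_eq_add (d : ℕ) :
    {m : Fin n →₀ ℕ | (mdeg m : ℤ) ≤ d}.ncard =
      {m : Fin n →₀ ℕ | (mdeg m : ℤ) ≤ (d : ℤ) - 1}.ncard + (degEQ n d).ncard := by
  have hsplit : {m : Fin n →₀ ℕ | (mdeg m : ℤ) ≤ d} =
      {m : Fin n →₀ ℕ | (mdeg m : ℤ) ≤ (d : ℤ) - 1} ∪ degEQ n d := by
    ext m
    simp only [degEQ, Set.mem_ofPred_eq, Set.mem_union]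
    omega
  rw [hsplit, Set.ncard_union_eq _ (finite_setOf_mdeg_le _) (finite_degEQ d)]
  exact Set.disjoint_left.2 fun m (h₁ : (mdeg m : ℤ) ≤ (d : ℤ) - 1) (h₂ : mdeg m = d) => by omega

theorem restrictTotalDegree_le_monSpan {e : ℕ} {i : ℤ} (h : (e : ℤ) ≤ i) :
    restrictTotalDegree (Fin n) K e ≤ monSpan K {m : Fin n →₀ ℕ | (mdeg m : ℤ) ≤ i} := by
  rw [monSpan_eq_restrictSupport]
  exact restrictSupport_mono K fun m (hm : mdeg m ≤ e) => show (mdeg m : ℤ) ≤ i by omega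

theorem Ile_mono (I : Ideal (MvPolynomial (Fin n) K)) : Monotone (Ile I) :=
  fun _ _ h => inf_le_inf_left _ (Submodule.span_mono (Set.image_mono
    fun m (hm : (mdeg m : ℤ) ≤ _) => show (mdeg m : ℤ) ≤ _ from hm.trans h))

theorem finiteDimensional_Ile (I : Ideal (MvPolynomial (Fin n) K)) (i : ℤ) :
    FiniteDimensional K (Ile I i) :=
  have := finiteDimensional_monSpan (K := K) (finite_setOf_mdeg_le (n := n) i)
  Submodule.finiteDimensional_of_le inf_le_right

end Monomials

section ZeroDimensional

variable {n : ℕ} {K : Type*} [Field K] (I : Ideal (MvPolynomial (Fin n) K))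

theorem ker_mkₐ_toLinearMap :
    LinearMap.ker (Ideal.Quotient.mkₐ K I).toLinearMap = I.restrictScalars K := by
  ext p
  simp [Ideal.Quotient.eq_zero_iff_mem]

theorem map_mk_monSpan_eq_top [FiniteDimensional K (MvPolynomial (Fin n) K ⧸ I)] {i : ℤ}
    (hi : (finrank K (MvPolynomial (Fin n) K ⧸ I) : ℤ) - 1 ≤ i) :
    (monSpan K {m : Fin n →₀ ℕ | (mdeg m : ℤ) ≤ i}).map (Ideal.Quotient.mkₐ K I).toLinearMap
      = ⊤ := by
  cases subsingleton_or_nontrivial (MvPolynomial (Fin n) K ⧸ I)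
  · exact Subsingleton.elim _ _
  have := finrank_pos (R := K) (M := MvPolynomial (Fin n) K ⧸ I)
  rw [eq_top_iff,
    ← map_restrictTotalDegree_finrank_pred_eq_top (Ideal.Quotient.mkₐ_surjective K I)]
  exact Submodule.map_mono (restrictTotalDegree_le_monSpan (by omega))

theorem finrank_Ile_add_finrank_quotient [FiniteDimensional K (MvPolynomial (Fin n) K ⧸ I)]
    {i : ℤ} (hi : (finrank K (MvPolynomial (Fin n) K ⧸ I) : ℤ) - 1 ≤ i) :
    finrank K (Ile I i) + finrank K (MvPolynomial (Fin n) K ⧸ I) =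
      {m : Fin n →₀ ℕ | (mdeg m : ℤ) ≤ i}.ncard := by
  have hfin := finite_setOf_mdeg_le (n := n) i
  have := finiteDimensional_monSpan (K := K) hfin
  have h := Submodule.finrank_map_add_finrank_ker_inf (Ideal.Quotient.mkₐ K I).toLinearMap
    (monSpan K {m : Fin n →₀ ℕ | (mdeg m : ℤ) ≤ i})
  rwa [map_mk_monSpan_eq_top I hi, finrank_top, ker_mkₐ_toLinearMap, finrank_monSpan hfin,
    add_comm] at h

end ZeroDimensional

/-- for a zero-dimensional ideal `I` with `d = dim_K K[X]/I`,
the quotient `I^{≤d}/I^{≤d-1}` is `K`-linearly isomorphic to `⟨T^n_{=d}⟩_K`;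
equivalently, `dim I^{≤d} - dim I^{≤d-1}` is the number of monomials of total
degree exactly `d`. -/
theorem Ile_quotient_iso_degEQ {n : ℕ} {K : Type*} [Field K]
    (I : Ideal (MvPolynomial (Fin n) K))
    (hI : FiniteDimensional K (MvPolynomial (Fin n) K ⧸ I))
    (d : ℕ) (hd : d = Module.finrank K (MvPolynomial (Fin n) K ⧸ I)) :
    Nonempty ((↥(Ile I d) ⧸
        Submodule.comap (Ile I d).subtype (Ile I ((d : ℤ) - 1))) ≃ₗ[K]
      ↥(monSpan K (degEQ n d))) ∧
    Module.finrank K ↥(Ile I d) - Module.finrank K ↥(Ile I ((d : ℤ) - 1)) =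
      (degEQ n d).ncard := by
  have hcard := ncard_setOf_mdeg_le_eq_add (n := n) d
  have hle := finrank_Ile_add_finrank_quotient I (i := d) (by omega)
  have hle_pred := finrank_Ile_add_finrank_quotient I (i := (d : ℤ) - 1) (by omega)
  have := finiteDimensional_Ile I d
  have := finiteDimensional_monSpan (K := K) (finite_degEQ (n := n) d)
  have hquot := Submodule.finrank_quotient_comap_subtype_add_finrank
    (Ile_mono I (sub_le_self (d : ℤ) zero_le_one))
  refine ⟨⟨LinearEquiv.ofFinrankEq _ _ ?_⟩, by omega⟩
  rw [finrank_monSpan (finite_degEQ d)]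
  omega
end

section
/- Let K be a field of characteristic zero, n ∈ ℕ, k ∈ {1,…,n}, and v_j = Σ_{i=1}^n i^j x_i ∈ K[x_1,…,x_n] for j ∈ {1,…,n−k}. Then for every subset S ⊆ {1,…,n} with |S| = k, the set {x_i : i ∈ S} ∪ {v_1,…,v_{n−k}} is a K-basis of the space of homogeneous polynomials of degree one in K[x_1,…,x_n]. -/
/-!
Identify a linear form `∑ c_i x_i` with its coefficient vector `c ∈ Kⁿ`. The family becomes
the unit vectors `e_s` (`s ∈ S`) together with the vectors `(i ^ j)_i`, `1 ≤ j ≤ n - k`. In a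
vanishing linear combination, the `n - k` coordinates outside `S` see only the vectors
`(i ^ j)_i`, and give a Vandermonde system in distinct nonzero nodes; so those coefficients
vanish, and then so do those of the `e_s`. Thus we have `n` independent vectors in an
`n`-dimensional space, and they form a basis.
-/

open MvPolynomial

/-- The linear form `v_j = ∑_{i=1}^n i^j x_i`. -/
noncomputable def vlin (K : Type*) [Field K] (n j : ℕ) : MvPolynomial (Fin n) K :=
  ∑ i : Fin n, C ((((i : ℕ) + 1) ^ j : ℕ) : K) * X i

section Columns

open Finset

variable {K : Type*} [Field K]

-- Dividing by the nonzero node `f i` leaves an ordinary square Vandermonde system.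
theorem eq_zero_of_forall_sum_mul_pow_succ_eq_zero {m : ℕ} {f c : Fin m → K}
    (hf : Function.Injective f) (hf0 : ∀ i, f i ≠ 0)
    (h : ∀ i, ∑ j, c j * f i ^ ((j : ℕ) + 1) = 0) : c = 0 := by
  refine Matrix.eq_zero_of_forall_index_sum_mul_pow_eq_zero hf fun i => ?_
  have hi : f i * ∑ j, c j * f i ^ (j : ℕ) = 0 := by
    rw [← h i, mul_sum]
    exact sum_congr rfl fun j _ => by ring
  exact (mul_eq_zero.mp hi).resolve_left (hf0 i)

variable {ι : Type*} [Fintype ι] [DecidableEq ι]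

theorem linearIndependent_sumElim_single_pow_succ (S : Finset ι) {m : ℕ} (hm : #Sᶜ = m)
    (a : ι → K) (ha : Set.InjOn a ↑Sᶜ) (ha0 : ∀ i ∉ S, a i ≠ 0) :
    LinearIndependent K (Sum.elim (fun s : S => Pi.single (s : ι) (1 : K))
      (fun (j : Fin m) (i : ι) => a i ^ ((j : ℕ) + 1))) := by
  rw [Fintype.linearIndependent_iff]
  intro g hg
  have hg_apply (i : ι) :
      ∑ s : S, g (.inl s) * (Pi.single (s : ι) (1 : K) : ι → K) i
        + ∑ j, g (.inr j) * a i ^ ((j : ℕ) + 1) = 0 := by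
    simpa [Fintype.sum_sum_type] using congrFun hg i
  have hinr : ∀ j, g (.inr j) = 0 := by
    let e : Fin m ≃ ↥(Sᶜ) := (Fintype.equivFinOfCardEq (by rw [Fintype.card_coe, hm])).symm
    refine congrFun (eq_zero_of_forall_sum_mul_pow_succ_eq_zero (f := fun j => a (e j))
      (fun j j' hjj' => e.injective (Subtype.ext (ha (e j).2 (e j').2 hjj')))
      (fun j => ha0 _ (mem_compl.mp (e j).2)) fun j => ?_)
    have hj : (e j : ι) ∉ S := mem_compl.mp (e j).2
    have hS0 : ∑ s : S, g (.inl s) * (Pi.single (s : ι) (1 : K) : ι → K) (e j) = 0 :=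
      sum_eq_zero fun s _ => by
        rw [Pi.single_eq_of_ne (ne_of_mem_of_not_mem s.2 hj).symm, mul_zero]
    simpa only [hS0, zero_add] using hg_apply (e j)
  rintro (s | j)
  · have hs := hg_apply s
    rw [Fintype.sum_eq_single s fun s' hs' => by
      rw [Pi.single_eq_of_ne (Subtype.coe_ne_coe.mpr hs'.symm), mul_zero]] at hs
    simpa [hinr] using hs
  · exact hinr j

end Columns

theorem vars_union_vlin_basis_general {K : Type*} [Field K] [CharZero K] (n k : ℕ)
    (hkn : k ≤ n) (S : Finset (Fin n)) (hS : S.card = k) :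
    LinearIndependent K
      (fun p : ↥S ⊕ Fin (n - k) =>
        Sum.elim (fun i : ↥S => (X (i : Fin n) : MvPolynomial (Fin n) K))
          (fun j : Fin (n - k) => vlin K n ((j : ℕ) + 1)) p) ∧
    Submodule.span K
      (Set.range
        (Sum.elim (fun i : ↥S => (X (i : Fin n) : MvPolynomial (Fin n) K))
          (fun j : Fin (n - k) => vlin K n ((j : ℕ) + 1)))) =
      homogeneousSubmodule (Fin n) K 1 := by
  classical
  set col := Sum.elim (fun s : S => Pi.single (s : Fin n) (1 : K))
    (fun (j : Fin (n - k)) (i : Fin n) => (((i : ℕ) + 1 : ℕ) : K) ^ ((j : ℕ) + 1))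
  have hcol : LinearIndependent K col :=
    linearIndependent_sumElim_single_pow_succ S (by simp [Finset.card_compl, hS]) _
      (fun i _ i' _ h => Fin.ext (by simpa using h))
      fun i _ => Nat.cast_ne_zero.mpr (Nat.succ_ne_zero _)
  set L := Fintype.linearCombination K (X (R := K) (σ := Fin n))
  have hL : Sum.elim (fun i : ↥S => (X (i : Fin n) : MvPolynomial (Fin n) K))
      (fun j : Fin (n - k) => vlin K n ((j : ℕ) + 1)) = L ∘ col := by
    funext p
    rcases p with s | j
    · simp [L, col, Fintype.linearCombination_apply_single]
    · simp [L, col, vlin, Fintype.linearCombination_apply, smul_eq_C_mul]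
  have hLinj : LinearMap.ker L = ⊥ :=
    LinearMap.ker_eq_bot.mpr (linearIndependent_iff_injective_fintypeLinearCombination.mp
      (linearIndependent_X (Fin n) K))
  refine ⟨hL ▸ hcol.map' L hLinj, ?_⟩
  have hspan : Submodule.span K (Set.range col) = ⊤ :=
    hcol.span_eq_top_of_card_eq_finrank' (by simp [hS]; omega)
  rw [hL, Set.range_comp, ← Submodule.map_span, hspan, Submodule.map_top,
    Fintype.range_linearCombination, homogeneousSubmodule_one_eq_span_X]

/-- for every `k`-element subset `S ⊆ {1,…,n}`, the family
`{x_i : i ∈ S} ∪ {v_1, …, v_{n-k}}` is a `K`-basis of the space of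
homogeneous polynomials of degree one. -/
theorem vars_union_vlin_basis {K : Type*} [Field K] [CharZero K] (n k : ℕ)
    (hk1 : 1 ≤ k) (hkn : k ≤ n) (S : Finset (Fin n)) (hS : S.card = k) :
    LinearIndependent K
      (fun p : ↥S ⊕ Fin (n - k) =>
        Sum.elim (fun i : ↥S => (X (i : Fin n) : MvPolynomial (Fin n) K))
          (fun j : Fin (n - k) => vlin K n ((j : ℕ) + 1)) p) ∧
    Submodule.span K
      (Set.range
        (Sum.elim (fun i : ↥S => (X (i : Fin n) : MvPolynomial (Fin n) K))
          (fun j : Fin (n - k) => vlin K n ((j : ℕ) + 1)))) =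
      homogeneousSubmodule (Fin n) K 1 :=
  vars_union_vlin_basis_general n k hkn S hS
end

section
/- Let K be a field of characteristic zero, n ∈ ℕ, k ∈ {1,…,n}, and F_{n,k} = {v_j : j ∈ [n−k]} ∪ T^n_{=3} ⊆ K[x_1,…,x_n] where v_j = Σ_{i=1}^n i^j x_i. Then K[x_1,…,x_n]/⟨F_{n,k}⟩ is isomorphic as a K-algebra to K[y_1,…,y_k]/⟨T^k_{=3}⟩, the polynomial ring in k variables modulo the ideal generated by all monomials of degree 3; in particular dim_K K[x_1,…,x_n]/⟨F_{n,k}⟩ = 1 + k + k(k+1)/2. -/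
open MvPolynomial

/-- The set `F_{n,k} = {v_j : j ∈ [n-k]} ∪ T^n_{=3}`. -/
noncomputable def Fnk (K : Type*) [Field K] (n k : ℕ) : Set (MvPolynomial (Fin n) K) :=
  (Set.range fun j : Fin (n - k) => vlin K n ((j : ℕ) + 1)) ∪
    ((fun m => monomial m (1 : K)) '' {m : Fin n →₀ ℕ | mdeg m = 3})

/-!
The forms `v_1, …, v_{n-k}` have Vandermonde coefficient vectors, so they span an
`(n-k)`-dimensional space of linear forms. A linear change of coordinates that kills this space
and maps a complement of it onto `y_1, …, y_k` respects the ideal `𝔪 = (x_1, …, x_n)`, and the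
cubic monomials generate exactly `𝔪 ^ 3`. Hence the quotient is `K[y_1, …, y_k] / 𝔪 ^ 3`,
which has the monomials of degree at most `2` as a basis: there are `(k + 2).choose 2` of them.
-/

open Finset Function Module

namespace Ideal

variable {R A B : Type*} [CommRing R] [CommRing A] [Algebra R A] [CommRing B] [Algebra R B]

noncomputable def quotientAlgEquivOfComp {I : Ideal A} {J : Ideal B}
    (f : A →ₐ[R] B) (g : B →ₐ[R] A) (hf : I ≤ J.comap f) (hg : J ≤ I.comap g)
    (hgf : (Quotient.mkₐ R I).comp (g.comp f) = Quotient.mkₐ R I)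
    (hfg : (Quotient.mkₐ R J).comp (f.comp g) = Quotient.mkₐ R J) :
    (A ⧸ I) ≃ₐ[R] (B ⧸ J) :=
  AlgEquiv.ofAlgHom (quotientMapₐ J f hf) (quotientMapₐ I g hg)
    (Quotient.algHom_ext R <| by
      rw [AlgHom.comp_assoc, quotient_map_comp_mkₐ, ← AlgHom.comp_assoc, quotient_map_comp_mkₐ,
        AlgHom.comp_assoc, hfg, AlgHom.id_comp])
    (Quotient.algHom_ext R <| by
      rw [AlgHom.comp_assoc, quotient_map_comp_mkₐ, ← AlgHom.comp_assoc, quotient_map_comp_mkₐ,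
        AlgHom.comp_assoc, hgf, AlgHom.id_comp])

end Ideal

theorem linearIndependent_pow_succ {R : Type*} [CommRing R] [IsDomain R] {m n : ℕ}
    (hmn : m ≤ n) {x : Fin n → R} (hx : Injective x) (hx0 : ∀ i, x i ≠ 0) :
    LinearIndependent R fun (j : Fin m) (i : Fin n) => x i ^ ((j : ℕ) + 1) := by
  rw [Fintype.linearIndependent_iff]
  intro c hc
  suffices c = 0 from congrFun this
  refine Matrix.eq_zero_of_forall_index_sum_mul_pow_eq_zero
    (hx.comp (Fin.castLE_injective hmn)) fun i => ?_
  have hi := congrFun hc (Fin.castLE hmn i)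
  simp only [Finset.sum_apply, Pi.smul_apply, smul_eq_mul, Pi.zero_apply, pow_succ,
    ← mul_assoc, ← Finset.sum_mul] at hi
  exact (mul_eq_zero.1 hi).resolve_right (hx0 _)

theorem Finsupp.natCard_degree_le {σ : Type*} [Fintype σ] (d : ℕ) :
    Nat.card {m : σ →₀ ℕ // m.degree ≤ d} =
      (d + Fintype.card σ).choose (Fintype.card σ) := by
  classical
  let S := (range (d + 1)).biUnion fun i => (univ : Finset σ).finsuppAntidiag i
  have hS (m : σ →₀ ℕ) : m.degree ≤ d ↔ m ∈ S := by
    simp [S, mem_finsuppAntidiag, degree_eq_sum]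
  calc Nat.card {m : σ →₀ ℕ // m.degree ≤ d} = #S := by
        rw [← Nat.card_eq_finsetCard]; exact Nat.card_congr (Equiv.subtypeEquivRight hS)
    _ = ∑ i ∈ range (d + 1), (Fintype.card σ).multichoose i := by
        rw [card_biUnion]
        · simp [card_finsuppAntidiag_nat_eq_multichoose]
        · intro i _ j _ hij
          exact disjoint_left.2 fun m hi hj =>
            hij ((mem_finsuppAntidiag.1 hi).1.symm.trans (mem_finsuppAntidiag.1 hj).1)
    _ = _ := Nat.sum_range_multichoose d _

theorem two_add_choose_eq (k : ℕ) : (2 + k).choose k = 1 + k + k * (k + 1) / 2 := by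
  rw [← Nat.choose_symm_add, Nat.choose_two_right, show 2 + k - 1 = k + 1 by omega,
    show (2 + k) * (k + 1) = k * (k + 1) + 2 * (k + 1) by ring, Nat.add_mul_div_left _ _ two_pos]
  omega

namespace MvPolynomial

variable {K : Type*} [Field K] {σ τ υ : Type*}

theorem isCompl_restrictSupport {R : Type*} [CommSemiring R] (s : Set (σ →₀ ℕ)) :
    IsCompl (restrictSupport R s) (restrictSupport R sᶜ) := by
  have hs : IsCompl (Finsupp.supported R R s) (Finsupp.supported R R sᶜ) :=
    ⟨Finsupp.disjoint_supported_supported isCompl_compl.disjoint,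
      Finsupp.codisjoint_supported_supported isCompl_compl.codisjoint⟩
  have := (Submodule.orderIsoMapComap
    (AddMonoidAlgebra.coeffLinearEquiv R (S := R) (M := σ →₀ ℕ)).symm).isCompl hs
  simpa [restrictSupport, AddMonoidAlgebra.supported_eq_map] using this

theorem finrank_quotient_pow_succ_idealOfVars (d : ℕ) :
    finrank K (MvPolynomial σ K ⧸ idealOfVars σ K ^ (d + 1)) =
      Nat.card {m : σ →₀ ℕ // m.degree ≤ d} := by
  have hI : (idealOfVars σ K ^ (d + 1)).restrictScalars K =
      restrictSupport K {m | d + 1 ≤ m.degree} := by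
    rw [pow_idealOfVars, restrictScalars_restrictSupportIdeal]; rfl
  have hcompl := isCompl_restrictSupport (R := K) {m : σ →₀ ℕ | d + 1 ≤ m.degree}
  rw [← hI] at hcompl
  rw [((Submodule.Quotient.restrictScalarsEquiv K _).symm ≪≫ₗ
    Submodule.quotientEquivOfIsCompl _ _ hcompl).finrank_eq,
    finrank_eq_nat_card_basis (basisRestrictSupport K _)]
  exact Nat.card_congr (Equiv.subtypeEquivRight fun _ => by simp)

section LinearForms

variable [Fintype σ]

theorem linearCombination_X_mem_idealOfVars (c : σ → K) :
    Fintype.linearCombination K X c ∈ idealOfVars σ K := by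
  rw [Fintype.linearCombination_apply]
  exact Ideal.sum_mem _ fun i _ =>
    Submodule.smul_of_tower_mem _ _ (Ideal.subset_span (Set.mem_range_self i))

theorem linearCombination_X_mem_span_image {s : Set (σ → K)} {c : σ → K}
    (hc : c ∈ Submodule.span K s) :
    Fintype.linearCombination K (X : σ → MvPolynomial σ K) c ∈
      Ideal.span (Fintype.linearCombination K X '' s) := by
  have hmem := Submodule.mem_map_of_mem (f := Fintype.linearCombination K
    (X : σ → MvPolynomial σ K)) hc
  rw [Submodule.map_span] at hmem
  exact Submodule.span_le_restrictScalars K _ _ hmem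

end LinearForms

section LinearSubst

variable [DecidableEq σ] [Fintype τ]

noncomputable def linearSubst (φ : (σ → K) →ₗ[K] (τ → K)) :
    MvPolynomial σ K →ₐ[K] MvPolynomial τ K :=
  aeval fun i => Fintype.linearCombination K X (φ (Pi.single i 1))

theorem linearSubst_linearCombination_X [Fintype σ] (φ : (σ → K) →ₗ[K] (τ → K)) (c : σ → K) :
    linearSubst φ (Fintype.linearCombination K X c) = Fintype.linearCombination K X (φ c) := by
  have : (linearSubst φ).toLinearMap ∘ₗ Fintype.linearCombination K X =
      Fintype.linearCombination K X ∘ₗ φ := by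
    refine LinearMap.pi_ext fun i a => ?_
    rw [← mul_one a, ← smul_eq_mul, Pi.single_smul]
    simp [linearSubst, Fintype.linearCombination_apply_single]
  exact LinearMap.congr_fun this c

theorem linearSubst_id [Fintype σ] :
    linearSubst (LinearMap.id : (σ → K) →ₗ[K] (σ → K)) = AlgHom.id K _ :=
  algHom_ext fun i => by simp [linearSubst, Fintype.linearCombination_apply_single]

theorem linearSubst_comp [DecidableEq τ] [Fintype υ] (φ : (τ → K) →ₗ[K] (υ → K))
    (ψ : (σ → K) →ₗ[K] (τ → K)) :
    (linearSubst φ).comp (linearSubst ψ) = linearSubst (φ ∘ₗ ψ) :=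
  algHom_ext fun i => by
    rw [AlgHom.comp_apply]
    simp only [linearSubst, aeval_X]
    exact linearSubst_linearCombination_X φ _

theorem map_linearSubst_pow_idealOfVars_le (φ : (σ → K) →ₗ[K] (τ → K)) (d : ℕ) :
    (idealOfVars σ K ^ d).map (linearSubst φ) ≤ idealOfVars τ K ^ d := by
  rw [Ideal.map_pow]
  refine Ideal.pow_right_mono ?_ d
  rw [Ideal.map_span, Ideal.span_le]
  rintro _ ⟨_, ⟨i, rfl⟩, rfl⟩
  simpa [linearSubst] using linearCombination_X_mem_idealOfVars (φ (Pi.single i 1))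

end LinearSubst

theorem nonempty_algEquiv_quotient_span_linearCombination_X [Fintype σ] [Fintype τ]
    (s : Set (σ → K)) (hs : finrank K ((σ → K) ⧸ Submodule.span K s) = Fintype.card τ)
    (d : ℕ) :
    Nonempty ((MvPolynomial σ K ⧸
        (Ideal.span (Fintype.linearCombination K X '' s) ⊔ idealOfVars σ K ^ d)) ≃ₐ[K]
      (MvPolynomial τ K ⧸ idealOfVars τ K ^ d)) := by
  classical
  obtain ⟨f, hker, hf⟩ : ∃ f : (σ → K) →ₗ[K] (τ → K),
      LinearMap.ker f = Submodule.span K s ∧ LinearMap.range f = ⊤ := by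
    let e : ((σ → K) ⧸ Submodule.span K s) ≃ₗ[K] (τ → K) :=
      LinearEquiv.ofFinrankEq _ _ (hs.trans (finrank_fintype_fun_eq_card K).symm)
    refine ⟨e.toLinearMap ∘ₗ (Submodule.span K s).mkQ, ?_, ?_⟩
    · rw [LinearEquiv.ker_comp, Submodule.ker_mkQ]
    · rw [LinearMap.range_comp, Submodule.range_mkQ, Submodule.map_top, LinearEquiv.range]
  obtain ⟨g, hfg⟩ := f.exists_rightInverse_of_surjective hf
  have hgf (v : σ → K) : g (f v) - v ∈ Submodule.span K s := by
    rw [← hker, LinearMap.mem_ker, map_sub, ← LinearMap.comp_apply f g, hfg, LinearMap.id_apply,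
      sub_self]
  refine ⟨Ideal.quotientAlgEquivOfComp (linearSubst f) (linearSubst g) ?_ ?_ ?_ ?_⟩
  · refine sup_le (Ideal.span_le.2 ?_)
      (Ideal.map_le_iff_le_comap.1 (map_linearSubst_pow_idealOfVars_le f d))
    rintro _ ⟨c, hc, rfl⟩
    have hfc : f c = 0 := by rw [← LinearMap.mem_ker, hker]; exact Submodule.subset_span hc
    simp [linearSubst_linearCombination_X, hfc]
  · exact Ideal.map_le_iff_le_comap.1
      ((map_linearSubst_pow_idealOfVars_le g d).trans le_sup_right)
  · refine algHom_ext fun i => ?_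
    rw [AlgHom.comp_apply, linearSubst_comp, linearSubst, aeval_X, Ideal.Quotient.mkₐ_eq_mk,
      Ideal.Quotient.mk_eq_mk_iff_sub_mem]
    refine Ideal.mem_sup_left ?_
    have hX : X i = Fintype.linearCombination K (X : σ → MvPolynomial σ K) (Pi.single i 1) := by
      simp [Fintype.linearCombination_apply_single]
    rw [hX, ← map_sub]
    exact linearCombination_X_mem_span_image (hgf _)
  · rw [linearSubst_comp, hfg, linearSubst_id, AlgHom.comp_id]

end MvPolynomial

theorem vlin_eq_linearCombination_X (K : Type*) [Field K] (n j : ℕ) :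
    vlin K n j = Fintype.linearCombination K X fun i : Fin n => ((i : ℕ) + 1 : K) ^ j := by
  simp only [vlin, Fintype.linearCombination_apply, smul_eq_C_mul]
  push_cast
  rfl

theorem span_monomial_mdeg_eq_pow_idealOfVars (K : Type*) [Field K] (n d : ℕ) :
    Ideal.span ((fun m => monomial m (1 : K)) '' {m : Fin n →₀ ℕ | mdeg m = d}) =
      idealOfVars (Fin n) K ^ d :=
  (pow_idealOfVars_eq_span d).symm

theorem Fnk_quotient_iso_general {K : Type*} [Field K] [CharZero K] (n k : ℕ)
    (hkn : k ≤ n) :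
    Nonempty ((MvPolynomial (Fin n) K ⧸ Ideal.span (Fnk K n k)) ≃ₐ[K]
      (MvPolynomial (Fin k) K ⧸
        Ideal.span ((fun m => monomial m (1 : K)) '' {m : Fin k →₀ ℕ | mdeg m = 3}))) ∧
    Module.finrank K (MvPolynomial (Fin n) K ⧸ Ideal.span (Fnk K n k)) =
      1 + k + k * (k + 1) / 2 := by
  let w : Fin (n - k) → Fin n → K := fun j i => ((i : ℕ) + 1 : K) ^ ((j : ℕ) + 1)
  have hw : LinearIndependent K w := linearIndependent_pow_succ (Nat.sub_le n k)
    (fun a b hab => Fin.ext (by simpa using hab)) fun i => Nat.cast_add_one_ne_zero i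
  have hcodim :
      finrank K ((Fin n → K) ⧸ Submodule.span K (Set.range w)) = Fintype.card (Fin k) := by
    have := (Submodule.span K (Set.range w)).finrank_quotient_add_finrank
    rw [finrank_span_eq_card hw, finrank_fin_fun, Fintype.card_fin] at this
    rw [Fintype.card_fin]; omega
  have hspan : Ideal.span (Fnk K n k) =
      Ideal.span (Fintype.linearCombination K X '' Set.range w) ⊔ idealOfVars (Fin n) K ^ 3 := by
    rw [Fnk, Ideal.span_union, span_monomial_mdeg_eq_pow_idealOfVars, ← Set.range_comp]
    simp only [comp_def, vlin_eq_linearCombination_X, w]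
  obtain ⟨e⟩ := nonempty_algEquiv_quotient_span_linearCombination_X _ hcodim 3
  rw [hspan, span_monomial_mdeg_eq_pow_idealOfVars]
  refine ⟨⟨e⟩, ?_⟩
  rw [e.toLinearEquiv.finrank_eq, finrank_quotient_pow_succ_idealOfVars 2,
    Finsupp.natCard_degree_le, Fintype.card_fin, two_add_choose_eq]

/-- `K[x_1,…,x_n]/⟨F_{n,k}⟩` is isomorphic as a `K`-algebra to
`K[y_1,…,y_k]/⟨T^k_{=3}⟩`; in particular its `K`-dimension is
`1 + k + k(k+1)/2`. -/
theorem Fnk_quotient_iso {K : Type*} [Field K] [CharZero K] (n k : ℕ)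
    (hk1 : 1 ≤ k) (hkn : k ≤ n) :
    Nonempty ((MvPolynomial (Fin n) K ⧸ Ideal.span (Fnk K n k)) ≃ₐ[K]
      (MvPolynomial (Fin k) K ⧸
        Ideal.span ((fun m => monomial m (1 : K)) '' {m : Fin k →₀ ℕ | mdeg m = 3}))) ∧
    Module.finrank K (MvPolynomial (Fin n) K ⧸ Ideal.span (Fnk K n k)) =
      1 + k + k * (k + 1) / 2 :=
  Fnk_quotient_iso_general n k hkn
end

section
/- Let K be a field of characteristic zero, Γ = (V, E) a simple graph with vertex set V = {1,…,n}, and k ∈ {1,…,n}. Let F_{n,k} = {v_j : j ∈ [n−k]} ∪ T^n_{=3} ⊆ K[x_1,…,x_n] with v_j = Σ_{i=1}^n i^j x_i. For an order ideal O, define its score as the number of degree-two monomials x_u x_v ∈ O with either {u,v} ∈ E or u = v. Then Γ contains a clique of size k if and only if there exists an order ideal O supporting a border basis of ⟨F_{n,k}⟩ whose score equals k(k+1)/2; moreover k(k+1)/2 is the maximum possible score over all such order ideals when Γ has a k-clique. -/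
open MvPolynomial

/-- The score of an order ideal `O` with respect to a graph `Γ`: the number of
degree-two monomials `x_u x_v ∈ O` with `{u,v} ∈ E` or `u = v`. -/
noncomputable def score {n : ℕ} (Γ : SimpleGraph (Fin n)) (O : Finset (Fin n →₀ ℕ)) : ℕ :=
  Set.ncard {m : Fin n →₀ ℕ | m ∈ O ∧ mdeg m = 2 ∧
    ∃ u v : Fin n, m = Finsupp.single u 1 + Finsupp.single v 1 ∧ (Γ.Adj u v ∨ u = v)}

/-!
Write `I = ⟨v_1, …, v_{n-k}⟩ + 𝔪³`, where `𝔪` is the ideal of the variables, and identify linear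
forms with `K^n`, so that `v_j` becomes the vector `(i^j)_i`. Any `n - k` coordinates of
`v_1, …, v_{n-k}` form an invertible Vandermonde matrix.

Upper bound: since `⟨O⟩ ∩ I = 0`, the variables `x_u ∈ O` span a subspace meeting `⟨v_j⟩`
trivially, so there are at most `k` of them; the score only counts products `x_u x_v` of such variables, so it is at most
`k(k+1)/2`, with equality only if there are exactly `k` of them and they pairwise span edges.

Construction: for a `k`-clique `C`, the Vandermonde property gives `K^n = ⟨v_j⟩ ⊕ ⟨e_c : c ∈ C⟩`.
Sending each `x_i` to its projection onto `⟨x_c : c ∈ C⟩` defines an algebra endomorphism `ψ` of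
`K[x]` that is the identity modulo `⟨v_j⟩`, fixes `K[x_c : c ∈ C]`, kills the `v_j` and maps `𝔪³`
into itself. So every `p` is congruent to `ψ p ∈ K[x_c : c ∈ C] ⊆ 𝔪³ + ⟨O_C⟩`, where `O_C` is the
set of monomials of degree `≤ 2` in the `x_c`; and an element of `I ∩ ⟨O_C⟩` equals its image under
`ψ`, which lies in `𝔪³`, so it vanishes.
-/

namespace MvPolynomial

variable {σ R : Type*} [CommRing R] (f : MvPolynomial σ R →ₐ[R] MvPolynomial σ R)

theorem sub_algHom_mem {I : Ideal (MvPolynomial σ R)} (hf : ∀ i, X i - f (X i) ∈ I)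
    (p : MvPolynomial σ R) : p - f p ∈ I := by
  have : (Ideal.Quotient.mkₐ R I).comp f = Ideal.Quotient.mkₐ R I :=
    algHom_ext fun i => by simpa [Ideal.Quotient.eq] using I.neg_mem_iff.mpr (hf i)
  rw [← Ideal.Quotient.eq]
  simpa using (congrArg (· p) this).symm

theorem algHom_mem_supported {s : Set σ} (hf : ∀ i, f (X i) ∈ supported R s)
    (p : MvPolynomial σ R) : f p ∈ supported R s := by
  have : Algebra.adjoin R (Set.range X) ≤ (supported R s).comap f :=
    Algebra.adjoin_le (by rintro _ ⟨i, rfl⟩; exact hf i)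
  exact this (adjoin_range_X (R := R) (σ := σ) ▸ Algebra.mem_top)

theorem algHom_eq_self_of_mem_supported {s : Set σ} (hf : ∀ i ∈ s, f (X i) = X i)
    {p : MvPolynomial σ R} (hp : p ∈ supported R s) : f p = p :=
  AlgHom.eqOn_adjoin_iff (φ := f) (ψ := AlgHom.id R _) |>.mpr
    (by rintro _ ⟨i, hi, rfl⟩; exact hf i hi) hp

theorem map_pow_idealOfVars_le (hf : ∀ i, f (X i) ∈ idealOfVars σ R) (d : ℕ) :
    (idealOfVars σ R ^ d).map f ≤ idealOfVars σ R ^ d := by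
  rw [Ideal.map_pow]
  refine Ideal.pow_right_mono ?_ d
  rw [Ideal.map_span, Ideal.span_le]
  rintro _ ⟨_, ⟨i, rfl⟩, rfl⟩
  exact hf i

theorem mem_supported_iff_support_subset {s : Set σ} {p : MvPolynomial σ R} :
    p ∈ supported R s ↔ ∀ m ∈ p.support, ↑m.support ⊆ s := by
  classical
  simp only [mem_supported, Set.subset_def, Finset.mem_coe, mem_vars_iff_mem_support]
  grind

end MvPolynomial

namespace CliqueBorderBasis

open Module Submodule Function

variable {K : Type*} [Field K] {n k : ℕ}

theorem linearIndependent_pow_succ {ι : Type*} [Fintype ι] {c : ι → K} (hc : Injective c)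
    (hc0 : ∀ i, c i ≠ 0) {m : ℕ} (hm : m ≤ Fintype.card ι) :
    LinearIndependent K fun (j : Fin m) (i : ι) => c i ^ ((j : ℕ) + 1) := by
  rw [Fintype.linearIndependent_iff]
  intro a ha
  set p : Polynomial K := ∑ j : Fin m, Polynomial.C (a j) * Polynomial.X ^ (j : ℕ)
  have hroot (i : ι) : c i * p.eval (c i) = 0 := by
    have := congrFun ha i
    simp only [Finset.sum_apply, Pi.smul_apply, smul_eq_mul, Pi.zero_apply] at this
    simp only [p, Polynomial.eval_finsetSum, Finset.mul_sum, Polynomial.eval_mul,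
      Polynomial.eval_C, Polynomial.eval_pow, Polynomial.eval_X, ← this]
    exact Finset.sum_congr rfl fun j _ => by ring
  have hp : p = 0 :=
    Polynomial.eq_zero_of_degree_lt_of_eval_index_eq_zero (s := Finset.univ) hc.injOn
      ((Polynomial.degree_sum_fin_lt a).trans_le (by exact_mod_cast hm))
      (fun i _ => (mul_eq_zero.mp (hroot i)).resolve_left (hc0 i))
  intro j
  simpa [p, Polynomial.finsetSum_coeff, Polynomial.coeff_C_mul_X_pow, Fin.val_inj] using
    congrArg (Polynomial.coeff · j) hp

variable (K) in
def powVec (n j : ℕ) : Fin n → K := fun i => ((((i : ℕ) + 1) ^ j : ℕ) : K)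

variable (K) in
def powSpan (n k : ℕ) : Submodule K (Fin n → K) :=
  span K (Set.range fun j : Fin (n - k) => powVec K n ((j : ℕ) + 1))

variable (K) in
def coordSpan {n : ℕ} (S : Finset (Fin n)) : Submodule K (Fin n → K) :=
  span K (Set.range fun u : S => Pi.single (u : Fin n) (1 : K))

theorem powVec_mem_powSpan (j : Fin (n - k)) : powVec K n ((j : ℕ) + 1) ∈ powSpan K n k :=
  subset_span ⟨j, rfl⟩

theorem single_mem_coordSpan {C : Finset (Fin n)} {c : Fin n} (hc : c ∈ C) :
    Pi.single c 1 ∈ coordSpan K C :=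
  subset_span ⟨⟨c, hc⟩, rfl⟩

theorem linearIndependent_restrict_powVec [CharZero K] (T : Finset (Fin n)) (hT : n - k ≤ T.card) :
    LinearIndependent K (LinearMap.funLeft K K ((↑) : T → Fin n) ∘
      fun j : Fin (n - k) => powVec K n ((j : ℕ) + 1)) := by
  have hc : Injective fun i : T => (((i : ℕ) + 1 : ℕ) : K) := fun a b h => by
    simpa [Fin.val_inj] using h
  convert linearIndependent_pow_succ hc (fun i => Nat.cast_ne_zero.mpr (Nat.succ_ne_zero _))
    (m := n - k) (by simpa using hT) using 1
  funext j i
  simp [powVec, LinearMap.funLeft_apply]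

theorem finrank_powSpan [CharZero K] : finrank K (powSpan K n k) = n - k := by
  rw [powSpan, finrank_span_eq_card
    ((linearIndependent_restrict_powVec Finset.univ (by simp)).of_comp _), Fintype.card_fin]

theorem finrank_coordSpan (S : Finset (Fin n)) : finrank K (coordSpan K S) = S.card := by
  have hli : LinearIndependent K fun u : S => (Pi.single (u : Fin n) (1 : K) : Fin n → K) :=
    (Pi.linearIndependent_single_one (Fin n) K).comp _ Subtype.val_injective
  rw [coordSpan, finrank_span_eq_card hli, Fintype.card_coe]

theorem coordSpan_le_ker_restrict (C : Finset (Fin n)) :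
    coordSpan K C ≤
      LinearMap.ker (LinearMap.funLeft K K ((↑) : (Cᶜ : Finset (Fin n)) → Fin n)) := by
  rw [coordSpan, span_le]
  rintro _ ⟨u, rfl⟩
  ext ⟨i, hi⟩
  have : i ≠ u := fun h => Finset.mem_compl.mp hi (h ▸ u.2)
  simp [LinearMap.funLeft_apply, this]

theorem isCompl_powSpan_coordSpan [CharZero K] {C : Finset (Fin n)} (hC : C.card = k) :
    IsCompl (powSpan K n k) (coordSpan K C) := by
  have hkn : k ≤ n := hC ▸ card_finset_fin_le C
  refine (isCompl_iff_disjoint _ _ (by simp [finrank_powSpan, finrank_coordSpan, hC]; omega)).mpr ?_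
  refine Disjoint.mono_right (coordSpan_le_ker_restrict C) (range_ker_disjoint ?_)
  exact linearIndependent_restrict_powVec _ (by simp [Finset.card_compl, hC])

variable (K n) in
noncomputable def linearForm : (Fin n → K) →ₗ[K] MvPolynomial (Fin n) K :=
  Fintype.linearCombination K X

theorem linearForm_injective : Injective (linearForm K n) :=
  (linearIndependent_X (R := K) (σ := Fin n)).fintypeLinearCombination_injective

@[simp] theorem linearForm_single (i : Fin n) : linearForm K n (Pi.single i 1) = X i := by
  simp [linearForm]

theorem linearForm_powVec (j : ℕ) : linearForm K n (powVec K n j) = vlin K n j := by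
  simp [linearForm, Fintype.linearCombination_apply, vlin, powVec, smul_eq_C_mul]

theorem map_linearForm_coordSpan (S : Finset (Fin n)) :
    (coordSpan K S).map (linearForm K n) = span K (Set.range fun u : S => X (u : Fin n)) := by
  rw [coordSpan, map_span, ← Set.range_comp]
  simp [Function.comp_def]

theorem map_linearForm_powSpan_le :
    (powSpan K n k).map (linearForm K n) ≤
      (Ideal.span (Set.range fun j : Fin (n - k) => vlin K n ((j : ℕ) + 1))).restrictScalars K := by
  rw [powSpan, map_span, span_le, ← Set.range_comp]
  rintro _ ⟨j, rfl⟩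
  exact Ideal.subset_span ⟨j, (linearForm_powVec _).symm⟩

theorem linearForm_mem_idealOfVars (y : Fin n → K) : linearForm K n y ∈ idealOfVars (Fin n) K := by
  rw [linearForm, Fintype.linearCombination_apply]
  exact Ideal.sum_mem _ fun i _ => by
    rw [smul_eq_C_mul]; exact Ideal.mul_mem_left _ _ (Ideal.subset_span ⟨i, rfl⟩)

theorem span_Fnk : Ideal.span (Fnk K n k) =
    Ideal.span (Set.range fun j : Fin (n - k) => vlin K n ((j : ℕ) + 1)) ⊔
      idealOfVars (Fin n) K ^ 3 := by
  rw [Fnk, Ideal.span_union, pow_idealOfVars_eq_span]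
  rfl

theorem idealOfVars_pow_le_span_Fnk : idealOfVars (Fin n) K ^ 3 ≤ Ideal.span (Fnk K n k) :=
  span_Fnk (K := K) ▸ le_sup_right

theorem span_vlin_le_span_Fnk :
    Ideal.span (Set.range fun j : Fin (n - k) => vlin K n ((j : ℕ) + 1)) ≤
      Ideal.span (Fnk K n k) :=
  span_Fnk (K := K) ▸ le_sup_left

noncomputable def linearSupport (O : Finset (Fin n →₀ ℕ)) : Finset (Fin n) :=
  Finset.univ.filter fun u => Finsupp.single u 1 ∈ O

theorem disjoint_powSpan_coordSpan_linearSupport {O : Finset (Fin n →₀ ℕ)}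
    (hO : Disjoint ((Ideal.span (Fnk K n k)).restrictScalars K) (monSpan K ↑O)) :
    Disjoint (powSpan K n k) (coordSpan K (linearSupport O)) := by
  have hcoord : (coordSpan K (linearSupport O)).map (linearForm K n) ≤ monSpan K ↑O := by
    rw [map_linearForm_coordSpan, span_le]
    rintro _ ⟨u, rfl⟩
    exact subset_span ⟨_, (Finset.mem_filter.mp u.2).2, rfl⟩
  have hmap := hO.mono
    (map_linearForm_powSpan_le.trans (restrictScalars_mono K span_vlin_le_span_Fnk)) hcoord
  rw [disjoint_iff, ← Submodule.map_inf _ linearForm_injective, ← map_bot (linearForm K n)] at hmap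
  exact disjoint_iff.mpr (map_injective_of_injective linearForm_injective hmap)

theorem card_linearSupport_le [CharZero K] {O : Finset (Fin n →₀ ℕ)}
    (hO : Disjoint ((Ideal.span (Fnk K n k)).restrictScalars K) (monSpan K ↑O)) :
    (linearSupport O).card ≤ k := by
  have hdim := finrank_sup_add_finrank_inf_eq (powSpan K n k) (coordSpan K (linearSupport O))
  rw [disjoint_iff.mp (disjoint_powSpan_coordSpan_linearSupport hO), finrank_bot,
    finrank_powSpan, finrank_coordSpan] at hdim
  have hsup := finrank_le (powSpan K n k ⊔ coordSpan K (linearSupport O))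
  rw [finrank_fin_fun] at hsup
  have := card_finset_fin_le (linearSupport O)
  omega

section Retraction

variable {C : Finset (Fin n)}

noncomputable def retraction (h : IsCompl (powSpan K n k) (coordSpan K C)) :
    MvPolynomial (Fin n) K →ₐ[K] MvPolynomial (Fin n) K :=
  aeval fun i => linearForm K n ((coordSpan K C).projection _ h.symm (Pi.single i 1))

variable (h : IsCompl (powSpan K n k) (coordSpan K C))

theorem retraction_linearForm (y : Fin n → K) :
    retraction h (linearForm K n y) = linearForm K n ((coordSpan K C).projection _ h.symm y) := by
  have : (retraction h).toLinearMap ∘ₗ linearForm K n =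
      linearForm K n ∘ₗ (coordSpan K C).projection _ h.symm :=
    (Pi.basisFun K (Fin n)).ext fun i => by simp [retraction]
  exact LinearMap.congr_fun this y

theorem retraction_vlin (j : Fin (n - k)) : retraction h (vlin K n ((j : ℕ) + 1)) = 0 := by
  rw [← linearForm_powVec, retraction_linearForm,
    projection_apply_of_mem_right _ (powVec_mem_powSpan j), map_zero]

theorem retraction_X_of_mem {c : Fin n} (hc : c ∈ C) : retraction h (X c) = X c := by
  rw [← linearForm_single, retraction_linearForm,
    projection_apply_of_mem_left _ (single_mem_coordSpan hc)]

theorem X_sub_retraction_mem (i : Fin n) :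
    X i - retraction h (X i) ∈
      Ideal.span (Set.range fun j : Fin (n - k) => vlin K n ((j : ℕ) + 1)) := by
  rw [← linearForm_single, retraction_linearForm, ← map_sub]
  refine map_linearForm_powSpan_le (mem_map_of_mem ?_)
  rw [← projection_eq_self_sub_projection]
  exact projection_apply_mem _ _

theorem retraction_X_mem_supported (i : Fin n) :
    retraction h (X i) ∈ supported K (C : Set (Fin n)) := by
  rw [← linearForm_single, retraction_linearForm]
  have : (coordSpan K C).map (linearForm K n) ≤ Subalgebra.toSubmodule (supported K ↑C) := by
    rw [map_linearForm_coordSpan, span_le]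
    rintro _ ⟨c, rfl⟩
    exact (X_mem_supported).mpr c.2
  exact this (mem_map_of_mem (projection_apply_mem _ _))

theorem retraction_X_mem_idealOfVars (i : Fin n) :
    retraction h (X i) ∈ idealOfVars (Fin n) K := by
  rw [← linearForm_single, retraction_linearForm]
  exact linearForm_mem_idealOfVars _

end Retraction

section CliqueOrderIdeal

variable {C : Finset (Fin n)}

noncomputable def cliqueOrderIdeal (C : Finset (Fin n)) : Finset (Fin n →₀ ℕ) :=
  (Finsupp.finite_of_degree_le 2).toFinset.filter fun m => m.support ⊆ C

theorem mem_cliqueOrderIdeal {m : Fin n →₀ ℕ} :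
    m ∈ cliqueOrderIdeal C ↔ m.degree ≤ 2 ∧ m.support ⊆ C := by
  simp [cliqueOrderIdeal]

theorem isOrderIdeal_cliqueOrderIdeal : IsOrderIdeal (cliqueOrderIdeal C) := by
  intro t ht t' hle
  rw [mem_cliqueOrderIdeal] at ht ⊢
  exact ⟨(Finsupp.degree_mono hle).trans ht.1, (Finsupp.support_mono hle).trans ht.2⟩

theorem monSpan_eq_restrictSupport (O : Set (Fin n →₀ ℕ)) : monSpan K O = restrictSupport K O :=
  (restrictSupport_eq_span K O).symm

theorem supported_le_pow_idealOfVars_sup_monSpan :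
    Subalgebra.toSubmodule (supported K (C : Set (Fin n))) ≤
      (idealOfVars (Fin n) K ^ 3).restrictScalars K ⊔ monSpan K ↑(cliqueOrderIdeal C) := by
  intro p hp
  rw [← support_sum_monomial_coeff p]
  refine sum_mem fun m hm => ?_
  rcases le_or_gt 3 m.degree with h3 | h2
  · exact mem_sup_left ((monomial_mem_pow_idealOfVars_iff _ _ (mem_support_iff.mp hm)).mpr h3)
  · refine mem_sup_right ?_
    rw [monSpan_eq_restrictSupport, monomial_mem_restrictSupport]
    exact Or.inl (mem_cliqueOrderIdeal.mpr
      ⟨by omega, mem_supported_iff_support_subset.mp hp m hm⟩)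

theorem map_retraction_span_Fnk_le (h : IsCompl (powSpan K n k) (coordSpan K C)) :
    (Ideal.span (Fnk K n k)).map (retraction h) ≤ idealOfVars (Fin n) K ^ 3 := by
  rw [span_Fnk, Ideal.map_sup, Ideal.map_span]
  refine sup_le (Ideal.span_le.mpr ?_)
    (map_pow_idealOfVars_le _ (retraction_X_mem_idealOfVars h) 3)
  rintro _ ⟨_, ⟨j, rfl⟩, rfl⟩
  simp [retraction_vlin]

theorem disjoint_span_Fnk_monSpan_cliqueOrderIdeal (h : IsCompl (powSpan K n k) (coordSpan K C)) :
    Disjoint ((Ideal.span (Fnk K n k)).restrictScalars K) (monSpan K ↑(cliqueOrderIdeal C)) := by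
  rw [Submodule.disjoint_def]
  intro w hwI hwO
  rw [monSpan_eq_restrictSupport, mem_restrictSupport_iff] at hwO
  have hsupp : w ∈ supported K (C : Set (Fin n)) := mem_supported_iff_support_subset.mpr
    fun m hm => by exact_mod_cast (mem_cliqueOrderIdeal.mp (hwO hm)).2
  have hw3 : w ∈ idealOfVars (Fin n) K ^ 3 := by
    rw [← algHom_eq_self_of_mem_supported _ (fun c hc => retraction_X_of_mem h hc) hsupp]
    exact map_retraction_span_Fnk_le h (Ideal.mem_map_of_mem _ hwI)
  rw [mem_pow_idealOfVars_iff] at hw3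
  refine support_eq_empty.mp (Finset.eq_empty_of_forall_notMem fun m hm => ?_)
  have := (mem_cliqueOrderIdeal.mp (hwO hm)).1
  have := hw3 m hm
  omega

theorem codisjoint_span_Fnk_monSpan_cliqueOrderIdeal
    (h : IsCompl (powSpan K n k) (coordSpan K C)) :
    Codisjoint ((Ideal.span (Fnk K n k)).restrictScalars K) (monSpan K ↑(cliqueOrderIdeal C)) := by
  rw [codisjoint_iff, eq_top_iff]
  intro p _
  rw [← sub_add_cancel p (retraction h p)]
  refine add_mem (mem_sup_left (span_vlin_le_span_Fnk
    (sub_algHom_mem _ (X_sub_retraction_mem h) p))) ?_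
  have := supported_le_pow_idealOfVars_sup_monSpan
    (algHom_mem_supported _ (retraction_X_mem_supported h) p)
  exact sup_le_sup_right (α := Submodule K (MvPolynomial (Fin n) K))
    (restrictScalars_mono K idealOfVars_pow_le_span_Fnk) _ this

theorem isCompl_span_Fnk_monSpan_cliqueOrderIdeal [CharZero K] (hC : C.card = k) :
    IsCompl ((Ideal.span (Fnk K n k)).restrictScalars K) (monSpan K ↑(cliqueOrderIdeal C)) :=
  ⟨disjoint_span_Fnk_monSpan_cliqueOrderIdeal (isCompl_powSpan_coordSpan hC),
    codisjoint_span_Fnk_monSpan_cliqueOrderIdeal (isCompl_powSpan_coordSpan hC)⟩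

end CliqueOrderIdeal

section Score

open Finset

noncomputable def pairMonomial : Sym2 (Fin n) → (Fin n →₀ ℕ) :=
  Sym2.lift ⟨fun u v => Finsupp.single u 1 + Finsupp.single v 1, fun _ _ => add_comm _ _⟩

@[simp] theorem pairMonomial_mk (u v : Fin n) :
    pairMonomial s(u, v) = Finsupp.single u 1 + Finsupp.single v 1 := rfl

theorem mem_support_pairMonomial {s : Sym2 (Fin n)} {x : Fin n} :
    x ∈ (pairMonomial s).support ↔ x ∈ s := by
  induction s using Sym2.ind with
  | _ u v => simp [Finsupp.single_apply, eq_comm (a := x)]; grind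

theorem pairMonomial_injective : Injective (pairMonomial (n := n)) := fun s t h =>
  Sym2.ext fun x => by rw [← mem_support_pairMonomial, h, mem_support_pairMonomial]

@[simp] theorem degree_pairMonomial (s : Sym2 (Fin n)) : (pairMonomial s).degree = 2 := by
  induction s using Sym2.ind with
  | _ u v => simp

theorem score_eq_card_filter (Γ : SimpleGraph (Fin n)) [DecidableRel Γ.Adj]
    {O : Finset (Fin n →₀ ℕ)} (hO : IsOrderIdeal O) :
    score Γ O =
      #{s ∈ (linearSupport O).sym2 | pairMonomial s ∈ O ∧ (s ∈ Γ.edgeSet ∨ s.IsDiag)} := by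
  have : {m : Fin n →₀ ℕ | m ∈ O ∧ mdeg m = 2 ∧
      ∃ u v : Fin n, m = Finsupp.single u 1 + Finsupp.single v 1 ∧ (Γ.Adj u v ∨ u = v)} =
      pairMonomial '' ↑{s ∈ (linearSupport O).sym2 |
        pairMonomial s ∈ O ∧ (s ∈ Γ.edgeSet ∨ s.IsDiag)} := by
    ext m
    constructor
    · rintro ⟨hmO, -, u, v, rfl, hadj⟩
      refine ⟨s(u, v), ?_, rfl⟩
      simp only [coe_filter, Set.mem_ofPred_eq, mk_mem_sym2_iff, linearSupport, mem_filter,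
        mem_univ, true_and, pairMonomial_mk, SimpleGraph.mem_edgeSet, Sym2.mk_isDiag_iff]
      exact ⟨⟨hO _ hmO _ le_self_add, hO _ hmO _ le_add_self⟩, hmO, hadj⟩
    · rintro ⟨s, hs, rfl⟩
      induction s using Sym2.ind with
      | _ u v =>
        simp only [coe_filter, Set.mem_ofPred_eq, SimpleGraph.mem_edgeSet,
          Sym2.mk_isDiag_iff] at hs
        exact ⟨hs.2.1, degree_pairMonomial _, u, v, rfl, hs.2.2⟩
  rw [score, this, Set.ncard_image_of_injective _ pairMonomial_injective, Set.ncard_coe_finset]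

theorem succ_choose_two_strictMono : StrictMono fun a => (a + 1).choose 2 :=
  strictMono_nat_of_lt_succ fun a => by
    have : (a + 1 + 1).choose 2 = (a + 1) + (a + 1).choose 2 := by
      rw [Nat.choose_succ_succ', Nat.choose_one_right]
    omega

theorem score_le_choose_two (Γ : SimpleGraph (Fin n)) {O : Finset (Fin n →₀ ℕ)}
    (hO : IsOrderIdeal O) : score Γ O ≤ (#(linearSupport O) + 1).choose 2 := by
  classical
  rw [score_eq_card_filter Γ hO, ← card_sym2]
  exact card_filter_le _ _

theorem isNClique_linearSupport_of_score_eq (Γ : SimpleGraph (Fin n)) {O : Finset (Fin n →₀ ℕ)}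
    (hO : IsOrderIdeal O) (hk : #(linearSupport O) ≤ k) (hscore : score Γ O = (k + 1).choose 2) :
    Γ.IsNClique k (linearSupport O) := by
  classical
  have hcard : #(linearSupport O) = k := by
    refine hk.antisymm (succ_choose_two_strictMono.le_iff_le.mp ?_)
    exact hscore ▸ score_le_choose_two Γ hO
  rw [score_eq_card_filter Γ hO, ← hcard, ← card_sym2] at hscore
  refine ⟨fun u hu v hv huv => ?_, hcard⟩
  have := (filter_card_eq hscore) s(u, v) (mk_mem_sym2_iff.mpr ⟨hu, hv⟩)
  simpa [huv] using this.2

theorem linearSupport_cliqueOrderIdeal (C : Finset (Fin n)) :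
    linearSupport (cliqueOrderIdeal C) = C := by
  ext u
  simp [linearSupport, mem_cliqueOrderIdeal]

theorem score_cliqueOrderIdeal (Γ : SimpleGraph (Fin n)) {C : Finset (Fin n)}
    (hC : Γ.IsClique (C : Set (Fin n))) :
    score Γ (cliqueOrderIdeal C) = (#C + 1).choose 2 := by
  classical
  rw [score_eq_card_filter Γ isOrderIdeal_cliqueOrderIdeal, linearSupport_cliqueOrderIdeal,
    filter_true_of_mem, card_sym2]
  intro s hs
  refine ⟨mem_cliqueOrderIdeal.mpr ⟨(degree_pairMonomial s).le, fun x hx => ?_⟩, ?_⟩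
  · exact mem_sym2_iff.mp hs x (mem_support_pairMonomial.mp hx)
  · induction s using Sym2.ind with
    | _ u v =>
      rw [mk_mem_sym2_iff] at hs
      rw [SimpleGraph.mem_edgeSet, Sym2.mk_isDiag_iff, or_comm]
      exact (eq_or_ne u v).imp_right (hC hs.1 hs.2)

end Score

end CliqueBorderBasis

open CliqueBorderBasis

theorem clique_iff_orderIdeal_score_general {K : Type*} [Field K] [CharZero K] (n k : ℕ)
    (Γ : SimpleGraph (Fin n)) :
    ((∃ C : Finset (Fin n), Γ.IsNClique k C) ↔
      ∃ O : Finset (Fin n →₀ ℕ), IsOrderIdeal O ∧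
        IsCompl (Submodule.restrictScalars K (Ideal.span (Fnk K n k)))
          (monSpan K (O : Set (Fin n →₀ ℕ))) ∧
        score Γ O = k * (k + 1) / 2) ∧
    ((∃ C : Finset (Fin n), Γ.IsNClique k C) →
      ∀ O : Finset (Fin n →₀ ℕ), IsOrderIdeal O →
        IsCompl (Submodule.restrictScalars K (Ideal.span (Fnk K n k)))
          (monSpan K (O : Set (Fin n →₀ ℕ))) →
        score Γ O ≤ k * (k + 1) / 2) := by
  have htri : k * (k + 1) / 2 = (k + 1).choose 2 := by
    rw [Nat.choose_two_right, Nat.add_sub_cancel, mul_comm]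
  have hmax (O : Finset (Fin n →₀ ℕ)) (hO : IsOrderIdeal O)
      (hcompl : IsCompl ((Ideal.span (Fnk K n k)).restrictScalars K) (monSpan K ↑O)) :
      score Γ O ≤ k * (k + 1) / 2 :=
    htri ▸ (score_le_choose_two Γ hO).trans
      (Nat.choose_le_choose 2 (Nat.succ_le_succ (card_linearSupport_le hcompl.disjoint)))
  refine ⟨⟨?_, ?_⟩, fun _ => hmax⟩
  · rintro ⟨C, hC⟩
    refine ⟨cliqueOrderIdeal C, isOrderIdeal_cliqueOrderIdeal,
      isCompl_span_Fnk_monSpan_cliqueOrderIdeal hC.card_eq, ?_⟩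
    rw [score_cliqueOrderIdeal Γ hC.isClique, hC.card_eq, htri]
  · rintro ⟨O, hO, hcompl, hscore⟩
    exact ⟨linearSupport O, isNClique_linearSupport_of_score_eq Γ hO
      (card_linearSupport_le hcompl.disjoint) (htri ▸ hscore)⟩

/-- `Γ` has a clique of size `k` iff some order ideal supporting
a border basis of `⟨F_{n,k}⟩` has score `k(k+1)/2`; moreover, when `Γ` has a
`k`-clique, `k(k+1)/2` is the maximum score of such order ideals. -/
theorem clique_iff_orderIdeal_score {K : Type*} [Field K] [CharZero K] (n k : ℕ)
    (hk1 : 1 ≤ k) (hkn : k ≤ n) (Γ : SimpleGraph (Fin n)) :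
    ((∃ C : Finset (Fin n), Γ.IsNClique k C) ↔
      ∃ O : Finset (Fin n →₀ ℕ), IsOrderIdeal O ∧
        IsCompl (Submodule.restrictScalars K (Ideal.span (Fnk K n k)))
          (monSpan K (O : Set (Fin n →₀ ℕ))) ∧
        score Γ O = k * (k + 1) / 2) ∧
    ((∃ C : Finset (Fin n), Γ.IsNClique k C) →
      ∀ O : Finset (Fin n →₀ ℕ), IsOrderIdeal O →
        IsCompl (Submodule.restrictScalars K (Ideal.span (Fnk K n k)))
          (monSpan K (O : Set (Fin n →₀ ℕ))) →
        score Γ O ≤ k * (k + 1) / 2) :=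
  clique_iff_orderIdeal_score_general n k Γ
end
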